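/- arXiv:2005.01695 — 7 statements merged into one kernel-verified Lean document; each statement's English description precedes it below -/
import Mathlib

section
/- Let ℓ be a natural number and let f be a trigonometric polynomial (a finite real linear combination of the functions cos(kx) and sin(kx), k ∈ ℕ) having at least ℓ zeros in an interval I ⊆ [0, 2π] of length η. Then sup_{x ∈ I} |f(x)| ≤ η^ℓ · sup_{x ∈ I} |f^{(ℓ)}(x)|, where f^{(ℓ)} denotes the ℓ-th derivative of f. -/
/-!
By Rolle's theorem, between two zeros of `f` lies a zero of `f'`, so `f'` has at least `ℓ - 1`
zeros in `I`. By induction `|f'| ≤ η ^ (ℓ - 1) * sup_I |f^(ℓ)|` on `I`, and the mean value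
theorem, applied from a zero of `f`, contributes the last factor `η`.
-/

open Real Set

def HasZeros (f : ℝ → ℝ) (S : Set ℝ) (n : ℕ) : Prop :=
  ∃ s : Finset ℝ, n ≤ s.card ∧ ∀ x ∈ s, x ∈ S ∧ f x = 0

theorem HasZeros.hasZeros_deriv {f : ℝ → ℝ} {S : Set ℝ} {n : ℕ} (hz : HasZeros f S (n + 1))
    (hS : S.OrdConnected) (hf : ContinuousOn f S) : HasZeros (deriv f) S n := by
  obtain ⟨s, hcard, hs⟩ := hz
  have hrolle : ∀ x ∈ s, ∀ y ∈ s, x < y → ∃ c ∈ Ioo x y, deriv f c = 0 := fun x hx y hy hxy =>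
    exists_deriv_eq_zero hxy (hf.mono (hS.out (hs x hx).1 (hs y hy).1))
      (by rw [(hs x hx).2, (hs y hy).2])
  choose! c hc_mem hc_zero using hrolle
  let t := ((s ×ˢ s).filter fun xy => xy.1 < xy.2).image fun xy => c xy.1 xy.2
  refine ⟨t, ?_, ?_⟩
  · have : s.card ≤ t.card + 1 := Finset.card_le_of_interleaved fun x hx y hy hxy _ =>
      ⟨c x y, Finset.mem_image.2 ⟨(x, y), by simp [hx, hy, hxy], rfl⟩, hc_mem x hx y hy hxy⟩
    omega
  · simp only [t, Finset.forall_mem_image, Finset.mem_filter, Finset.mem_product, Prod.forall]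
    rintro x y ⟨⟨hx, hy⟩, hxy⟩
    exact ⟨hS.out (hs x hx).1 (hs y hy).1 (Ioo_subset_Icc_self (hc_mem x hx y hy hxy)),
      hc_zero x hx y hy hxy⟩

theorem abs_le_mul_of_abs_deriv_le {f : ℝ → ℝ} {p q C z x : ℝ}
    (hf : ∀ y ∈ Icc p q, DifferentiableAt ℝ f y) (hC : ∀ y ∈ Icc p q, |deriv f y| ≤ C)
    (hz : z ∈ Icc p q) (hfz : f z = 0) (hx : x ∈ Icc p q) : |f x| ≤ C * (q - p) := by
  have hmvt := Convex.norm_image_sub_le_of_norm_deriv_le hf hC (convex_Icc p q) hz hx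
  rw [Real.norm_eq_abs, Real.norm_eq_abs, hfz, sub_zero] at hmvt
  have hxz : |x - z| ≤ q - p :=
    abs_sub_le_iff.2 ⟨by linarith [hx.2, hz.1], by linarith [hx.1, hz.2]⟩
  exact hmvt.trans (mul_le_mul_of_nonneg_left hxz ((abs_nonneg _).trans (hC x hx)))

theorem abs_le_pow_mul_of_abs_iteratedDeriv_le {ℓ : ℕ} {f : ℝ → ℝ} {p q M : ℝ}
    (hf : ContDiff ℝ ℓ f) (hz : HasZeros f (Icc p q) ℓ)
    (hM : ∀ y ∈ Icc p q, |iteratedDeriv ℓ f y| ≤ M) {x : ℝ} (hx : x ∈ Icc p q) :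
    |f x| ≤ (q - p) ^ ℓ * M := by
  induction ℓ generalizing f x with
  | zero => simpa using hM x hx
  | succ ℓ ih =>
    obtain ⟨hdiff, -, hderiv⟩ := contDiff_succ_iff_deriv.1 (by simpa only [Nat.cast_succ] using hf)
    have hbound : ∀ y ∈ Icc p q, |deriv f y| ≤ (q - p) ^ ℓ * M := fun y hy =>
      ih hderiv (hz.hasZeros_deriv ordConnected_Icc hdiff.continuous.continuousOn)
        (by simpa only [← iteratedDeriv_succ'] using hM) hy
    obtain ⟨s, hcard, hs⟩ := hz
    obtain ⟨z, hz⟩ := Finset.card_pos.1 (by omega : 0 < s.card)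
    calc |f x| ≤ (q - p) ^ ℓ * M * (q - p) :=
          abs_le_mul_of_abs_deriv_le (fun y _ => hdiff y) hbound (hs z hz).1 (hs z hz).2 hx
      _ = (q - p) ^ (ℓ + 1) * M := by ring

theorem sSup_abs_le_pow_mul_sSup_abs_iteratedDeriv {ℓ : ℕ} {f : ℝ → ℝ} {p q : ℝ}
    (hf : ContDiff ℝ ℓ f) (hpq : p ≤ q) (hz : HasZeros f (Icc p q) ℓ) :
    sSup ((fun x => |f x|) '' Icc p q) ≤
      (q - p) ^ ℓ * sSup ((fun x => |iteratedDeriv ℓ f x|) '' Icc p q) := by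
  have hbdd : BddAbove ((fun x => |iteratedDeriv ℓ f x|) '' Icc p q) :=
    (isCompact_Icc.image (hf.continuous_iteratedDeriv ℓ le_rfl).abs).bddAbove
  refine csSup_le ((nonempty_Icc.2 hpq).image _) ?_
  rintro _ ⟨x, hx, rfl⟩
  exact abs_le_pow_mul_of_abs_iteratedDeriv_le hf hz
    (fun y hy => le_csSup hbdd (mem_image_of_mem _ hy)) hx

theorem stmt5_general (ℓ N : ℕ) (a b : ℕ → ℝ) (p q η : ℝ) (hpq : p ≤ q)
    (hη : q - p = η)
    (f : ℝ → ℝ)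
    (hf : f = fun x => ∑ k ∈ Finset.range (N + 1),
      (a k * Real.cos (k * x) + b k * Real.sin (k * x)))
    (hzeros : ∃ s : Finset ℝ, ℓ ≤ s.card ∧ ∀ x ∈ s, x ∈ Set.Icc p q ∧ f x = 0) :
    sSup ((fun x => |f x|) '' Set.Icc p q) ≤
      η ^ ℓ * sSup ((fun x => |iteratedDeriv ℓ f x|) '' Set.Icc p q) := by
  subst hη
  have hsmooth : ContDiff ℝ ℓ f := hf ▸ by fun_prop
  exact sSup_abs_le_pow_mul_sSup_abs_iteratedDeriv hsmooth hpq hzeros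

/-- Let `f(x) = ∑_{k=0}^N (a_k cos(kx) + b_k sin(kx))` be a trigonometric polynomial with at
least `ℓ` zeros in an interval `I = [p,q] ⊆ [0,2π]` of length `η`.  Then
`sup_{x ∈ I} |f(x)| ≤ η^ℓ * sup_{x ∈ I} |f^{(ℓ)}(x)|`. -/
theorem stmt5 (ℓ N : ℕ) (a b : ℕ → ℝ) (p q η : ℝ) (hpq : p ≤ q)
    (hsub : Set.Icc p q ⊆ Set.Icc 0 (2 * π)) (hη : q - p = η)
    (f : ℝ → ℝ)
    (hf : f = fun x => ∑ k ∈ Finset.range (N + 1),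
      (a k * Real.cos (k * x) + b k * Real.sin (k * x)))
    (hzeros : ∃ s : Finset ℝ, ℓ ≤ s.card ∧ ∀ x ∈ s, x ∈ Set.Icc p q ∧ f x = 0) :
    sSup ((fun x => |f x|) '' Set.Icc p q) ≤
      η ^ ℓ * sSup ((fun x => |iteratedDeriv ℓ f x|) '' Set.Icc p q) :=
  stmt5_general ℓ N a b p q η hpq hη f hf hzeros
end

section
/- Set B(x) = 1/sin(x/2). For every x ∈ (0, π] and every natural number r, the r-th derivative of B satisfies |B^{(r)}(x)| ≤ (2^{r+3} · r!)/x^{r+1}. -/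
open Real

/-! Extend `B` to the meromorphic function `z ↦ 1 / sin (z / 2)`. On the closed disc of radius
`x / 2` about `x ∈ (0, π]` the real part of `z / 2` lies in `[x / 4, 3x / 4]`, so
`‖sin (z / 2)‖ ≥ |sin (Re z / 2)| ≥ x / 8` by Jordan's inequality. Cauchy's estimate on that disc
bounds the `r`-th complex derivative by `r! · (8 / x) / (x / 2) ^ r`, and the real derivative is the
real part of the complex one. -/

open Complex in
theorem Complex.abs_sin_re_le_norm_sin (w : ℂ) : |Real.sin w.re| ≤ ‖Complex.sin w‖ := by
  have hre : (Complex.sin w).re = Real.sin w.re * Real.cosh w.im := by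
    rw [Complex.sin_eq]
    simp [add_re, mul_re, sin_ofReal_re, cos_ofReal_re, cosh_ofReal_re, sinh_ofReal_re,
      sin_ofReal_im, cos_ofReal_im, cosh_ofReal_im, sinh_ofReal_im]
  calc |Real.sin w.re| ≤ |Real.sin w.re| * Real.cosh w.im :=
        le_mul_of_one_le_right (abs_nonneg _) (Real.one_le_cosh _)
    _ = |(Complex.sin w).re| := by rw [hre, abs_mul, abs_of_pos (Real.cosh_pos _)]
    _ ≤ ‖Complex.sin w‖ := Complex.abs_re_le_norm _

theorem Real.two_div_pi_mul_le_sin {a u : ℝ} (ha : 0 ≤ a) (hau : a ≤ u) (hua : u ≤ π - a) :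
    2 / π * a ≤ Real.sin u := by
  have hπ : 0 < 2 / π := by positivity
  rcases le_total u (π / 2) with hu | hu
  · exact (mul_le_mul_of_nonneg_left hau hπ.le).trans (Real.mul_le_sin (ha.trans hau) hu)
  · rw [← Real.sin_pi_sub]
    exact (mul_le_mul_of_nonneg_left (by linarith) hπ.le).trans
      (Real.mul_le_sin (by linarith) (by linarith))

theorem div_eight_le_norm_sin_half {x : ℝ} (hx : x ∈ Set.Ioc 0 π) {z : ℂ}
    (hz : z ∈ Metric.closedBall (x : ℂ) (x / 2)) : x / 8 ≤ ‖Complex.sin (z / 2)‖ := by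
  obtain ⟨hx0, hxπ⟩ := hx
  have hre : |z.re - x| ≤ x / 2 := by
    simpa using (Complex.abs_re_le_norm (z - x)).trans (mem_closedBall_iff_norm.mp hz)
  obtain ⟨hre₁, hre₂⟩ := abs_le.mp hre
  calc x / 8 ≤ 2 / π * (x / 4) := by
        rw [div_mul_div_comm, div_le_div_iff₀ (by norm_num) (by positivity)]
        nlinarith [Real.pi_le_four]
    _ ≤ Real.sin (z.re / 2) := Real.two_div_pi_mul_le_sin (by positivity) (by linarith)
        (by linarith)
    _ ≤ |Real.sin (z / 2).re| := by rw [Complex.div_ofNat_re]; exact le_abs_self _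
    _ ≤ ‖Complex.sin (z / 2)‖ := Complex.abs_sin_re_le_norm_sin _

theorem differentiableAt_one_div_sin_half {z : ℂ} (hz : Complex.sin (z / 2) ≠ 0) :
    DifferentiableAt ℂ (fun z : ℂ => 1 / Complex.sin (z / 2)) z :=
  (differentiableAt_const 1).div (differentiableAt_id.div_const 2).csin hz

theorem iteratedDeriv_re_comp_ofReal {f : ℂ → ℂ} {U : Set ℂ} (hU : IsOpen U)
    (hf : DifferentiableOn ℂ f U) (n : ℕ) {t : ℝ} (ht : (t : ℂ) ∈ U) :
    iteratedDeriv n (fun s : ℝ => (f s).re) t = (iteratedDeriv n f t).re := by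
  induction n generalizing t with
  | zero => simp
  | succ n ih =>
    have hnhds : {s : ℝ | (s : ℂ) ∈ U} ∈ nhds t :=
      (hU.preimage Complex.continuous_ofReal).mem_nhds ht
    have heq : iteratedDeriv n (fun s : ℝ => (f s).re) =ᶠ[nhds t]
        fun s => (iteratedDeriv n f s).re :=
      Filter.eventually_of_mem hnhds fun s hs => ih hs
    have hderiv : HasDerivAt (iteratedDeriv n f) (iteratedDeriv (n + 1) f t) t := by
      have hanalytic := (hf.analyticOnNhd hU).iterated_deriv n
      rw [← iteratedDeriv_eq_iterate] at hanalytic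
      rw [iteratedDeriv_succ]
      exact (hanalytic _ ht).differentiableAt.hasDerivAt
    rw [iteratedDeriv_succ, heq.deriv_eq]
    exact hderiv.real_of_complex.deriv

theorem one_div_sin_half_eq_re :
    (fun y : ℝ => 1 / Real.sin (y / 2)) = fun y : ℝ => (1 / Complex.sin ((y : ℂ) / 2)).re := by
  funext y
  rw [← Complex.ofReal_ofNat, ← Complex.ofReal_div, ← Complex.ofReal_sin, ← Complex.ofReal_one,
    ← Complex.ofReal_div, Complex.ofReal_re]

theorem norm_iteratedDeriv_one_div_sin_half_le (r : ℕ) {x : ℝ} (hx : x ∈ Set.Ioc 0 π) :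
    ‖iteratedDeriv r (fun z : ℂ => 1 / Complex.sin (z / 2)) x‖ ≤
      2 ^ (r + 3) * r.factorial / x ^ (r + 1) := by
  have hx0 : 0 < x := hx.1
  have hsin : ∀ z ∈ Metric.closedBall (x : ℂ) (x / 2), Complex.sin (z / 2) ≠ 0 := fun z hz h ↦ by
    have := div_eight_le_norm_sin_half hx hz
    rw [h, norm_zero] at this
    linarith
  have hdiff : DifferentiableOn ℂ (fun z : ℂ => 1 / Complex.sin (z / 2))
      (Metric.closedBall (x : ℂ) (x / 2)) := fun z hz ↦
    (differentiableAt_one_div_sin_half (hsin z hz)).differentiableWithinAt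
  have hbound : ∀ z ∈ Metric.sphere (x : ℂ) (x / 2), ‖1 / Complex.sin (z / 2)‖ ≤ 8 / x := by
    intro z hz
    have hlow := div_eight_le_norm_sin_half hx (Metric.sphere_subset_closedBall hz)
    rw [norm_div, norm_one, div_le_div_iff₀ (by linarith) hx0]
    linarith
  calc _ ≤ r.factorial * (8 / x) / (x / 2) ^ r :=
        Complex.norm_iteratedDeriv_le_of_forall_mem_sphere_norm_le r (by positivity)
          (hdiff.diffContOnCl_ball le_rfl) hbound
    _ = 2 ^ (r + 3) * r.factorial / x ^ (r + 1) := by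
        rw [div_pow, pow_succ, pow_add]
        field_simp
        ring

/-- For `B(x) = 1 / sin(x/2)`, every `x ∈ (0, π]` and every `r ∈ ℕ`,
`|B^{(r)}(x)| ≤ 2^{r+3} r! / x^{r+1}`. -/
theorem stmt6 (r : ℕ) (x : ℝ) (hx : x ∈ Set.Ioc (0 : ℝ) π) :
    |iteratedDeriv r (fun y => 1 / Real.sin (y / 2)) x| ≤
      2 ^ (r + 3) * (r.factorial : ℝ) / x ^ (r + 1) := by
  have hU : IsOpen {z : ℂ | Complex.sin (z / 2) ≠ 0} :=
    isOpen_ne_fun (Complex.continuous_sin.comp (continuous_id.div_const 2)) continuous_const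
  have hdiff : DifferentiableOn ℂ (fun z : ℂ => 1 / Complex.sin (z / 2))
      {z : ℂ | Complex.sin (z / 2) ≠ 0} := fun _ hz ↦
    (differentiableAt_one_div_sin_half hz).differentiableWithinAt
  have hx_mem : Complex.sin ((x : ℂ) / 2) ≠ 0 := by
    rw [← Complex.ofReal_ofNat, ← Complex.ofReal_div, ← Complex.ofReal_sin, Complex.ofReal_ne_zero]
    exact (Real.sin_pos_of_pos_of_lt_pi (by linarith [hx.1]) (by linarith [hx.2, pi_pos])).ne'
  rw [one_div_sin_half_eq_re, iteratedDeriv_re_comp_ofReal hU hdiff r hx_mem]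
  exact (Complex.abs_re_le_norm _).trans (norm_iteratedDeriv_one_div_sin_half_le r hx)
end

section
/- Let g be a trigonometric polynomial with deg(g) ≤ m. Then the set E(g) = {x ∈ (0, π] : |g(x) − 1/2| < s(x)} can be written as a union of at most 8m + 4 intervals. -/
/-!
For `z = exp (x i)` and `x ∈ (0, π]`, the condition `|g x - 1/2| < s(x)` reads `0 < F x` with
`F x = 1 - 2 (1 - cos x) (g x - 1/2)²`, and `F x · z^(2m+1) = z^(2m+1) + (z - 1)² G(z)²`, where
`G` is the polynomial of degree `≤ 2m` with `G(z) = (g x - 1/2) z^m`. This nonzero polynomial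
has at most `4m + 2` roots, so `F` has at most `4m + 2` zeros in `(0, π]`; by the intermediate
value theorem its positivity set there splits into at most `4m + 3` intervals.
-/

open Real

noncomputable def sfun (x : ℝ) : ℝ := (2 * Real.sin (x / 2))⁻¹

section ZeroFreePieces

/-- `p = ⊥` stands for the piece below every point of `Z`. -/
def posPiece {α : Type*} [LinearOrder α] (F : α → ℝ) (s : Set α) (Z : Finset α)
    (p : WithBot α) : Set α :=
  {x ∈ s | 0 < F x ∧ p < x ∧ ∀ q ∈ Z, (q : WithBot α) ≤ p ∨ x ≤ q}

theorem mem_posPiece_max {α : Type*} [LinearOrder α] {F : α → ℝ} {s : Set α} (Z : Finset α)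
    {x : α} (hxs : x ∈ s) (hFx : 0 < F x) : x ∈ posPiece F s Z (Z.filter (· < x)).max := by
  refine ⟨hxs, hFx, ?_, fun q hq => ?_⟩
  · exact (Finset.sup_lt_iff (WithBot.bot_lt_coe x)).mpr fun q hq =>
      WithBot.coe_lt_coe.mpr (Finset.mem_filter.mp hq).2
  · rcases lt_or_ge q x with hqx | hxq
    · exact Or.inl (Finset.le_max (Finset.mem_filter.mpr ⟨hq, hqx⟩))
    · exact Or.inr hxq

variable {α : Type*} [TopologicalSpace α] [ConditionallyCompleteLinearOrder α] [OrderTopology α]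
  [DenselyOrdered α] {F : α → ℝ} {s : Set α}

theorem ordConnected_posPiece (hs : s.OrdConnected) (hF : ContinuousOn F s) {Z : Finset α}
    (hZ : ∀ x ∈ s, F x = 0 → x ∈ Z) (p : WithBot α) : (posPiece F s Z p).OrdConnected := by
  refine ⟨?_⟩
  rintro x ⟨hxs, hFx, hpx, -⟩ y ⟨hys, hFy, -, hyZ⟩ c ⟨hxc, hcy⟩
  have hIcc : Set.Icc x c ⊆ s := (Set.Icc_subset_Icc_right hcy).trans (hs.out hxs hys)
  refine ⟨hIcc ⟨hxc, le_rfl⟩, ?_, hpx.trans_le (WithBot.coe_le_coe.mpr hxc),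
    fun q hq => (hyZ q hq).imp_right hcy.trans⟩
  by_contra! hFc
  obtain ⟨z, ⟨hxz, hzc⟩, hFz⟩ :=
    intermediate_value_Icc' hxc (hF.mono hIcc) ⟨hFc, hFx.le⟩
  have hyz : y ≤ z := (hyZ z (hZ z (hIcc ⟨hxz, hzc⟩) hFz)).resolve_left
    (hpx.trans_le (WithBot.coe_le_coe.mpr hxz)).not_ge
  exact hFy.ne' (le_antisymm (hzc.trans hcy) hyz ▸ hFz)

theorem exists_ordConnected_iUnion_eq_setOf_pos (hs : s.OrdConnected) (hF : ContinuousOn F s)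
    (Z : Finset α) (hZ : ∀ x ∈ s, F x = 0 → x ∈ Z) :
    ∃ t ≤ Z.card + 1, ∃ I : Fin t → Set α,
      (∀ i, (I i).OrdConnected) ∧ {x ∈ s | 0 < F x} = ⋃ i, I i := by
  classical
  set P : Finset (WithBot α) := insert ⊥ (Z.image (↑))
  refine ⟨P.card, (Finset.card_insert_le _ _).trans (by grw [Finset.card_image_le]),
    fun i => posPiece F s Z (P.equivFin.symm i), fun i => ordConnected_posPiece hs hF hZ _, ?_⟩
  ext x
  simp only [Set.mem_iUnion]
  constructor
  · rintro ⟨hxs, hFx⟩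
    have hP : (Z.filter (· < x)).max ∈ P := Finset.insert_subset_insert _
      (Finset.image_subset_image (Finset.filter_subset _ _))
      (Finset.max_mem_insert_bot_image_coe _)
    exact ⟨P.equivFin ⟨_, hP⟩, by simpa using mem_posPiece_max Z hxs hFx⟩
  · rintro ⟨i, hxs, hFx, -⟩
    exact ⟨hxs, hFx⟩

end ZeroFreePieces

section CirclePolynomials

open Complex Polynomial Finset

/-- For `z = exp (x i)`, `a cos kx + b sin kx = ((a - b i) z^k + (a + b i) z^(-k)) / 2`;
the factor `z^n` clears the negative powers. -/
noncomputable def trigPolyToPoly (n : ℕ) (a b : ℕ → ℝ) : ℂ[X] :=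
  ∑ k ∈ range (n + 1),
    (C ((a k - b k * I) / 2) * X ^ (n + k) + C ((a k + b k * I) / 2) * X ^ (n - k))

theorem natDegree_trigPolyToPoly_le (n : ℕ) (a b : ℕ → ℝ) :
    (trigPolyToPoly n a b).natDegree ≤ 2 * n := by
  refine natDegree_sum_le_of_forall_le _ _ fun k hk => ?_
  have hkn : k ≤ n := Nat.lt_succ_iff.mp (mem_range.mp hk)
  refine (natDegree_add_le _ _).trans (max_le ?_ ?_) <;>
    refine (natDegree_C_mul_le _ _).trans ?_ <;> rw [natDegree_X_pow] <;> omega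

theorem eval_exp_trigPolyToPoly (n : ℕ) (a b : ℕ → ℝ) (x : ℝ) :
    (trigPolyToPoly n a b).eval (exp (x * I)) =
      (∑ k ∈ range (n + 1), (a k * Real.cos (k * x) + b k * Real.sin (k * x)) : ℝ) *
        exp (x * I) ^ n := by
  push_cast
  rw [trigPolyToPoly, eval_finsetSum, sum_mul]
  refine sum_congr rfl fun k hk => ?_
  obtain ⟨j, rfl⟩ := Nat.exists_eq_add_of_le (Nat.lt_succ_iff.mp (mem_range.mp hk))
  have hpow : exp (x * I) ^ k = Complex.cos (k * x) + Complex.sin (k * x) * I := by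
    rw [← Complex.exp_nat_mul, ← exp_mul_I]; ring_nf
  simp only [eval_add, eval_mul, eval_C, eval_pow, eval_X, Nat.add_sub_cancel_left, pow_add]
  rw [hpow]
  set c := Complex.cos (k * x)
  set s := Complex.sin (k * x)
  linear_combination exp (x * I) ^ j / 2 * (-(a k + b k * I) * Complex.sin_sq_add_cos_sq (k * x)
    + (a k * s ^ 2 - 2 * b k * c * s - b k * s ^ 2 * I) * Complex.I_sq)

theorem eval_exp_X_pow_add_sub_one_sq_mul_sq {G : ℂ[X]} {m : ℕ} {x u : ℝ}
    (hG : G.eval (exp (x * I)) = u * exp (x * I) ^ m) :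
    (X ^ (2 * m + 1) + (X - 1) ^ 2 * G ^ 2).eval (exp (x * I)) =
      (1 - 2 * (1 - Real.cos x) * u ^ 2 : ℝ) * exp (x * I) ^ (2 * m + 1) := by
  have hsq : (exp (x * I) - 1) ^ 2 = -2 * (1 - Complex.cos x) * exp (x * I) := by
    rw [exp_mul_I]
    linear_combination Complex.sin x ^ 2 * I_sq - Complex.sin_sq_add_cos_sq x
  simp only [eval_add, eval_mul, eval_pow, eval_sub, eval_X, eval_one, hG, hsq]
  push_cast
  ring

theorem natDegree_X_pow_add_sub_one_sq_mul_sq_le {G : ℂ[X]} {m : ℕ}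
    (hG : G.natDegree ≤ 2 * m) :
    (X ^ (2 * m + 1) + (X - 1) ^ 2 * G ^ 2 : ℂ[X]).natDegree ≤ 4 * m + 2 := by
  refine (natDegree_add_le _ _).trans (max_le ?_ ?_)
  · rw [natDegree_X_pow]; omega
  · have h1 : ((X - 1 : ℂ[X]) ^ 2).natDegree ≤ 2 := by
      rw [natDegree_pow, ← C_1, natDegree_X_sub_C]
    have h2 : (G ^ 2).natDegree ≤ 2 * (2 * m) := natDegree_pow_le.trans (by omega)
    exact natDegree_mul_le.trans (by omega)

theorem X_pow_add_sub_one_sq_mul_sq_ne_zero (G : ℂ[X]) (m : ℕ) :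
    (X ^ (2 * m + 1) + (X - 1) ^ 2 * G ^ 2 : ℂ[X]) ≠ 0 :=
  fun h => by simpa using congrArg (eval 1) h

/-- `arg` inverts `x ↦ exp (x * I)` on `(-π, π]`. -/
theorem exists_finset_card_le_natDegree_of_eval_exp_eq_zero {P : ℂ[X]} (hP : P ≠ 0) :
    ∃ Z : Finset ℝ, Z.card ≤ P.natDegree ∧
      ∀ x ∈ Set.Ioc (-π) π, P.eval (exp (x * I)) = 0 → x ∈ Z := by
  classical
  refine ⟨P.roots.toFinset.image arg,
    card_image_le.trans ((Multiset.toFinset_card_le _).trans (card_roots' P)), fun x hx hPx => ?_⟩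
  refine mem_image.mpr ⟨exp (x * I), Multiset.mem_toFinset.mpr ((mem_roots hP).mpr hPx), ?_⟩
  rw [arg_exp_mul_I, toIocMod_eq_self]
  simpa [show -π + 2 * π = π by ring] using hx

theorem exists_finset_card_le_of_one_sub_mul_trigPoly_sq_eq_zero (m : ℕ) (a b : ℕ → ℝ) :
    ∃ Z : Finset ℝ, Z.card ≤ 4 * m + 2 ∧ ∀ x ∈ Set.Ioc (-π) π,
      1 - 2 * (1 - Real.cos x) * ((∑ k ∈ range (m + 1),
        (a k * Real.cos (k * x) + b k * Real.sin (k * x))) - 1 / 2) ^ 2 = 0 → x ∈ Z := by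
  set G := trigPolyToPoly m a b - C (1 / 2) * X ^ m
  have hGdeg : G.natDegree ≤ 2 * m := (natDegree_sub_le _ _).trans
    (max_le (natDegree_trigPolyToPoly_le m a b)
      ((natDegree_C_mul_le _ _).trans (by rw [natDegree_X_pow]; omega)))
  obtain ⟨Z, hZcard, hZ⟩ :=
    exists_finset_card_le_natDegree_of_eval_exp_eq_zero (X_pow_add_sub_one_sq_mul_sq_ne_zero G m)
  refine ⟨Z, hZcard.trans (natDegree_X_pow_add_sub_one_sq_mul_sq_le hGdeg),
    fun x hx hF => hZ x hx ?_⟩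
  have hG : G.eval (exp (x * I)) = ((∑ k ∈ range (m + 1),
      (a k * Real.cos (k * x) + b k * Real.sin (k * x))) - 1 / 2 : ℝ) * exp (x * I) ^ m := by
    simp only [G, eval_sub, eval_mul, eval_C, eval_pow, eval_X, eval_exp_trigPolyToPoly]
    push_cast
    ring
  rw [eval_exp_X_pow_add_sub_one_sq_mul_sq hG, hF, Complex.ofReal_zero, zero_mul]

end CirclePolynomials

theorem abs_lt_sfun_iff {x : ℝ} (hx : 0 < Real.sin (x / 2)) (u : ℝ) :
    |u| < sfun x ↔ 0 < 1 - 2 * (1 - Real.cos x) * u ^ 2 := by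
  have hcos : 1 - 2 * (1 - Real.cos x) * u ^ 2 = 1 - (2 * Real.sin (x / 2) * u) ^ 2 := by
    rw [show x = 2 * (x / 2) by ring, Real.cos_two_mul, Real.cos_sq']
    ring_nf
  have h2s : 0 < 2 * Real.sin (x / 2) := by positivity
  rw [hcos, sub_pos, sq_lt_one_iff_abs_lt_one, abs_mul, abs_of_pos h2s, sfun, inv_eq_one_div,
    lt_div_iff₀' h2s]

/-- Let `g(x) = ∑_{k=0}^m (a_k cos(kx) + b_k sin(kx))` be a trigonometric polynomial of
degree at most `m`.  Then `E(g) = {x ∈ (0,π] : |g(x) - 1/2| < s(x)}` is a union of at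
most `8m + 4` intervals. -/
theorem stmt10 (m : ℕ) (a b : ℕ → ℝ) (g : ℝ → ℝ)
    (hg : g = fun x => ∑ k ∈ Finset.range (m + 1),
      (a k * Real.cos (k * x) + b k * Real.sin (k * x))) :
    ∃ t : ℕ, t ≤ 8 * m + 4 ∧ ∃ I : Fin t → Set ℝ,
      (∀ i, (I i).OrdConnected) ∧
      {x ∈ Set.Ioc (0 : ℝ) π | |g x - 1 / 2| < sfun x} = ⋃ i, I i := by
  subst hg
  obtain ⟨Z, hZcard, hZ⟩ := exists_finset_card_le_of_one_sub_mul_trigPoly_sq_eq_zero m a b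
  obtain ⟨t, ht, I, hI, hE⟩ := exists_ordConnected_iUnion_eq_setOf_pos (s := Set.Ioc 0 π)
    Set.ordConnected_Ioc (F := fun x => 1 - 2 * (1 - Real.cos x) * ((∑ k ∈ Finset.range (m + 1),
      (a k * Real.cos (k * x) + b k * Real.sin (k * x))) - 1 / 2) ^ 2)
    (by fun_prop) Z fun x hx => hZ x ⟨by linarith [hx.1, pi_pos], hx.2⟩
  refine ⟨t, by omega, I, hI, hE ▸ Set.ext fun x => and_congr_right fun hx => ?_⟩
  exact abs_lt_sfun_iff (sin_pos_of_pos_of_lt_pi (half_pos hx.1) (by linarith [hx.2, pi_pos])) _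
end

section
/- Let n be a natural number, set T = n + 1/2, let g be a continuous function on [0, π], and set f = D_n − g. If I is an interval contained in E(g) = {x ∈ (0, π] : |g(x) − 1/2| < s(x)}, then the number of zeros of f in I satisfies Z_I(f) ≥ ⌊(T/(2π))·|I|⌋, where |I| is the length of I. -/
/-!
Telescoping `2 sin (x/2) cos (k x)` gives `D_n(x) - 1/2 = sin (T x) · s(x)` with `T = n + 1/2`.
At the points where `|sin (T x)| = 1`, i.e. `T x ∈ π/2 + πℤ`, this says `D_n(x) - 1/2 = ±s(x)`,
and on `E(g)` the bound `|g(x) - 1/2| < s(x)` forces `f = D_n - g` to carry the sign of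
`sin (T x)`. Consecutive such points are `π/T` apart and `sin (T x)` alternates on them, so an
interval of length `L` inside `E(g)` contains `⌊T L / (2π)⌋ + 1` of them, hence that many sign
changes of `f`, each giving a zero by the intermediate value theorem.
-/

open Real

/-- The Dirichlet-type kernel `D_n(x) = ∑_{k=0}^n cos (k x)`. -/
noncomputable def Dker (n : ℕ) : ℝ → ℝ := fun x => ∑ k ∈ Finset.range (n + 1), Real.cos (k * x)

open Set

theorem exists_mem_Ioo_eq_zero_of_mul_neg {f : ℝ → ℝ} {p q : ℝ} (hpq : p ≤ q)
    (hf : ContinuousOn f (Icc p q)) (h : f p * f q < 0) : ∃ z ∈ Ioo p q, f z = 0 := by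
  rcases mul_neg_iff.1 h with ⟨hp, hq⟩ | ⟨hp, hq⟩
  · exact intermediate_value_Ioo' hpq hf ⟨hq, hp⟩
  · exact intermediate_value_Ioo hpq hf ⟨hp, hq⟩

theorem le_encard_zeros_of_sign_changes {f : ℝ → ℝ} {a b : ℝ} {m : ℕ} {p : ℕ → ℝ}
    (hf : ContinuousOn f (Icc a b)) (hp : StrictMono p) (ha : a ≤ p 0) (hb : p m ≤ b)
    (hsign : ∀ j < m, p j ∈ Icc a b → p (j + 1) ∈ Icc a b → f (p j) * f (p (j + 1)) < 0) :
    (m : ℕ∞) ≤ {x ∈ Icc a b | f x = 0}.encard := by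
  have hpIcc : ∀ j ≤ m, p j ∈ Icc a b := fun j hj =>
    ⟨ha.trans (hp.monotone j.zero_le), (hp.monotone hj).trans hb⟩
  have hzero : ∀ j : Fin m, ∃ z ∈ Ioo (p j) (p (j + 1)), f z = 0 := fun j =>
    exists_mem_Ioo_eq_zero_of_mul_neg (hp j.val.lt_succ_self).le
      (hf.mono (Icc_subset_Icc (hpIcc j j.2.le).1 (hpIcc (j + 1) j.2).2))
      (hsign j j.2 (hpIcc j j.2.le) (hpIcc (j + 1) j.2))
  choose z hz hfz using hzero
  have hz_mono : StrictMono z := fun i j hij =>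
    ((hz i).2.trans_le (hp.monotone (Nat.succ_le_of_lt hij))).trans (hz j).1
  calc (m : ℕ∞) = ENat.card (Fin m) := by simp
    _ ≤ (range z).encard := hz_mono.injective.encard_range
    _ ≤ _ := by
      refine encard_le_encard (range_subset_iff.2 fun j => ?_)
      exact ⟨⟨(hpIcc j j.2.le).1.trans (hz j).1.le, (hz j).2.le.trans (hpIcc (j + 1) j.2).2⟩, hfz j⟩

theorem continuous_Dker (n : ℕ) : Continuous (Dker n) := by
  unfold Dker; fun_prop

theorem two_mul_Dker_sub_one_mul_sin_half (n : ℕ) (x : ℝ) :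
    (2 * Dker n x - 1) * sin (x / 2) = sin ((n + 1 / 2) * x) := by
  induction n with
  | zero => simp [Dker]; ring_nf
  | succ n ih =>
    have h := two_mul_sin_mul_cos (x / 2) ((n + 1) * x)
    rw [show x / 2 - (n + 1) * x = -((n + 1 / 2) * x) by ring, sin_neg,
      show x / 2 + (n + 1) * x = ((n : ℝ) + 1 + 1 / 2) * x by ring] at h
    simp only [Dker, Finset.sum_range_succ] at ih ⊢
    push_cast at ih ⊢
    linear_combination ih + h

theorem Dker_sub_half_eq {n : ℕ} {x : ℝ} (hx : sin (x / 2) ≠ 0) :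
    Dker n x - 1 / 2 = sin ((n + 1 / 2) * x) * sfun x := by
  rw [sfun, ← two_mul_Dker_sub_one_mul_sin_half]
  field_simp

theorem sin_mul_Dker_sub_pos {n : ℕ} {x c : ℝ} (hc : |c - 1 / 2| < sfun x)
    (hx : |sin ((n + 1 / 2) * x)| = 1) : 0 < sin ((n + 1 / 2) * x) * (Dker n x - c) := by
  set σ := sin ((n + 1 / 2) * x)
  have hsin : sin (x / 2) ≠ 0 := by
    intro h
    rw [sfun, h, mul_zero, inv_zero] at hc
    exact (abs_nonneg _).not_gt hc
  have hσσ : σ * σ = 1 := by rw [← abs_mul_abs_self, hx, one_mul]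
  have hσc : σ * (c - 1 / 2) ≤ |c - 1 / 2| := by
    simpa only [abs_mul, hx, one_mul] using le_abs_self (σ * (c - 1 / 2))
  calc 0 < sfun x - |c - 1 / 2| := sub_pos.2 hc
    _ ≤ sfun x - σ * (c - 1 / 2) := by linarith
    _ = σ * (σ * sfun x - (c - 1 / 2)) := by linear_combination -sfun x * hσσ
    _ = σ * (Dker n x - c) := by rw [← Dker_sub_half_eq hsin]; ring

theorem exists_abs_sin_eq_one_of_le_sub {α β : ℝ} {m : ℕ} (h : (m + 1) * π ≤ β - α) :
    ∃ θ, |sin θ| = 1 ∧ α ≤ θ ∧ θ + m * π ≤ β := by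
  set k := ⌈(α - π / 2) / π⌉
  refine ⟨π / 2 + k * π, abs_sin_eq_one_iff.2 ⟨k, rfl⟩, ?_, ?_⟩
  · have := Int.le_ceil ((α - π / 2) / π)
    rw [div_le_iff₀ pi_pos] at this
    linarith
  · have : ((k : ℝ) - 1) * π < α - π / 2 := by
      rw [← lt_div_iff₀ pi_pos]
      linarith [Int.ceil_lt_add_one ((α - π / 2) / π)]
    linarith

theorem Dker_sub_mul_Dker_sub_neg {n : ℕ} {x y c d : ℝ} (hc : |c - 1 / 2| < sfun x)
    (hd : |d - 1 / 2| < sfun y) (hx : |sin ((n + 1 / 2) * x)| = 1)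
    (hxy : sin ((n + 1 / 2) * y) = -sin ((n + 1 / 2) * x)) :
    (Dker n x - c) * (Dker n y - d) < 0 := by
  have hy : |sin ((n + 1 / 2) * y)| = 1 := by rw [hxy, abs_neg, hx]
  have hpos := mul_pos (sin_mul_Dker_sub_pos hc hx) (sin_mul_Dker_sub_pos hd hy)
  have hσσ := abs_mul_abs_self (sin ((n + 1 / 2) * x))
  rw [hx, one_mul] at hσσ
  rw [hxy] at hpos
  nlinarith

theorem stmt12_general (n : ℕ) (g : ℝ → ℝ) (hg : ContinuousOn g (Set.Icc 0 π))
    (f : ℝ → ℝ) (hf : f = fun x => Dker n x - g x)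
    (a b : ℝ)
    (hI : Set.Icc a b ⊆ {x ∈ Set.Ioc (0 : ℝ) π | |g x - 1 / 2| < sfun x}) :
    (⌊((n : ℝ) + 1 / 2) / (2 * π) * (b - a)⌋₊ : ℕ∞) ≤ {x ∈ Set.Icc a b | f x = 0}.encard := by
  subst hf
  set T : ℝ := n + 1 / 2
  have hT : 0 < T := by positivity
  set m := ⌊T / (2 * π) * (b - a)⌋₊
  rcases m.eq_zero_or_pos with hm | hm
  · simp [hm]
  have hlen : (m + 1) * π ≤ T * b - T * a := by
    have hfloor : (m : ℝ) ≤ T / (2 * π) * (b - a) :=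
      Nat.floor_le (zero_le_one.trans (Nat.floor_pos.1 hm))
    rw [div_mul_eq_mul_div, le_div_iff₀ (by positivity)] at hfloor
    have hm_one : (1 : ℝ) ≤ m := Nat.one_le_cast.2 hm
    nlinarith [pi_pos]
  obtain ⟨θ, hθ, haθ, hθb⟩ := exists_abs_sin_eq_one_of_le_sub hlen
  have hTp : ∀ j : ℕ, T * ((θ + j * π) / T) = θ + j * π := fun j => mul_div_cancel₀ _ hT.ne'
  apply le_encard_zeros_of_sign_changes (p := fun j : ℕ => (θ + j * π) / T)
  · exact (continuous_Dker n).continuousOn.sub (hg.mono fun x hx => Ioc_subset_Icc_self (hI hx).1)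
  · intro i j hij
    dsimp only
    gcongr
  · simpa [le_div_iff₀ hT, mul_comm] using haθ
  · rw [div_le_iff₀ hT]
    linarith
  · intro j _ hpj hpj'
    refine Dker_sub_mul_Dker_sub_neg (hI hpj).2 (hI hpj').2 ?_ ?_
    · rw [hTp, sin_add_nat_mul_pi, abs_mul, abs_pow, abs_neg, abs_one, one_pow, one_mul, hθ]
    · rw [hTp, hTp]
      push_cast
      rw [add_one_mul, ← add_assoc, sin_add_pi]

/-- Let `T = n + 1/2`, let `g` be continuous on `[0, π]` and let `f = D_n - g`.  If
`I = [a,b]` is an interval contained in `E(g) = {x ∈ (0,π] : |g(x) - 1/2| < s(x)}`, then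
`f` has at least `⌊(T/2π)|I|⌋` zeros in `I`. -/
theorem stmt12 (n : ℕ) (g : ℝ → ℝ) (hg : ContinuousOn g (Set.Icc 0 π))
    (f : ℝ → ℝ) (hf : f = fun x => Dker n x - g x)
    (a b : ℝ) (hab : a ≤ b)
    (hI : Set.Icc a b ⊆ {x ∈ Set.Ioc (0 : ℝ) π | |g x - 1 / 2| < sfun x}) :
    (⌊((n : ℝ) + 1 / 2) / (2 * π) * (b - a)⌋₊ : ℕ∞) ≤ {x ∈ Set.Icc a b | f x = 0}.encard :=
  stmt12_general n g hg f hf a b hI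
end

section
/- For every ε > 0 there exists a natural number m_0 such that for all integers m ≥ m_0, all integers n ≥ m, and every integer j with m/2 ≤ j ≤ m − 1, the following holds: if f(x) = ∑_{k=0}^{n} cos(kx) − ∑_{k=0}^{m} ε_k cos(kx), where ε_0, …, ε_m are independent random variables taking values 0 and 1 each with probability 1/2, and I = [π j/m, π (j+1)/m], then P(f has at least one zero in I) ≥ 1/4 − ε. -/
open Real

/-- The random polynomial `f ~ F_{n,m}` determined by the Bernoulli outcomes
`e : Fin (m+1) → Bool`:  `f(x) = ∑_{k=0}^n cos(kx) - ∑_{k=0}^m ε_k cos(kx)`. -/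
noncomputable def F (n m : ℕ) (e : Fin (m + 1) → Bool) : ℝ → ℝ :=
  fun x => Dker n x - ∑ k : Fin (m + 1), (if e k then (1 : ℝ) else 0) * Real.cos ((k : ℕ) * x)

/-!
Let `x` and `y` be the endpoints of `I` for which `m x / π` is even and `m y / π` is odd; both lie
in `[π/2, π]`, where every Dirichlet kernel is bounded by `2`. Write `f = D_n - S` with
`S(θ) = ∑_{k ≤ m} ε_k cos (kθ)`. Reversing the coefficients (`ε_k ↦ ε_{m-k}`) fixes `S(x)` and
negates `S(y)`, while complementing them (`ε_k ↦ 1 - ε_k`) sends `S(x)` to `D_m(x) - S(x)`. These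
two measure-preserving symmetries give `f(x) > 0 > f(y)` with probability at least `1/4`, up to the
probability that `S(x)` or `S(y)` falls into a fixed interval of length `12`.

Since `m θ ∈ π ℤ` forces `∑_{k ≤ m} cos² (kθ) ≥ (m + 1)/2`, at least a third of the coefficients
satisfy `|cos (kθ)| ≥ 1/2`, and the Erdős–Littlewood–Offord inequality (Sperner's theorem applied
to the selections whose sum falls into a short interval) bounds these small-ball probabilities by
`O(1/√m)`.
-/
open Finset

theorem two_mul_sin_half_mul_Dker (n : ℕ) (x : ℝ) :
    2 * sin (x / 2) * Dker n x = sin ((n + 1 / 2) * x) + sin (x / 2) := by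
  induction n with
  | zero =>
    simp only [Dker, zero_add, range_one, sum_singleton, CharP.cast_eq_zero, zero_mul, cos_zero]
    ring_nf
  | succ n ih =>
    have hsplit : Dker (n + 1) x = Dker n x + cos ((n + 1 : ℕ) * x) := sum_range_succ _ _
    have hup : ((n + 1 : ℕ) + 1 / 2 : ℝ) * x = (n + 1 : ℕ) * x + x / 2 := by push_cast; ring
    have hdown : ((n : ℝ) + 1 / 2) * x = (n + 1 : ℕ) * x - x / 2 := by push_cast; ring
    rw [hsplit, mul_add, ih, hup, hdown, sin_add, sin_sub]
    ring

theorem abs_Dker_le_two {x : ℝ} (hx : 1 / 2 ≤ sin (x / 2)) (n : ℕ) : |Dker n x| ≤ 2 := by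
  have hsum : |sin ((n + 1 / 2) * x) + sin (x / 2)| ≤ 2 :=
    (abs_add_le _ _).trans (by linarith [abs_sin_le_one ((n + 1 / 2) * x), abs_sin_le_one (x / 2)])
  rw [← two_mul_sin_half_mul_Dker, abs_mul, abs_of_pos (by linarith)] at hsum
  nlinarith [abs_nonneg (Dker n x)]

theorem abs_Dker_le_two_of_mem_Icc {x : ℝ} (hx : x ∈ Set.Icc (π / 2) π) (n : ℕ) :
    |Dker n x| ≤ 2 := by
  refine abs_Dker_le_two ?_ n
  rw [← sin_pi_div_six]
  apply sin_le_sin_of_le_of_le_pi_div_two <;> linarith [hx.1, hx.2, pi_pos]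

theorem Dker_two_mul_nonneg {m r : ℕ} {θ : ℝ} (hθ : m * θ = r * π) : 0 ≤ Dker m (2 * θ) := by
  by_cases hsin : sin θ = 0
  · obtain ⟨l, rfl⟩ := sin_eq_zero_iff.mp hsin
    refine sum_nonneg fun k _ => ?_
    have : (k : ℝ) * (2 * (l * π)) = ((k * l : ℤ) : ℝ) * (2 * π) := by push_cast; ring
    rw [this, cos_int_mul_two_pi]
    exact zero_le_one
  · have hid := two_mul_sin_half_mul_Dker m (2 * θ)
    have harg : ((m : ℝ) + 1 / 2) * (2 * θ) = θ + r * (2 * π) := by linear_combination 2 * hθ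
    rw [harg, sin_add_nat_mul_two_pi, mul_div_cancel_left₀ θ two_ne_zero] at hid
    have : Dker m (2 * θ) = 1 := by
      apply mul_left_cancel₀ (mul_ne_zero two_ne_zero hsin)
      linarith
    rw [this]
    exact zero_le_one

theorem sum_cos_sq_ge {m r : ℕ} {θ : ℝ} (hθ : m * θ = r * π) :
    ((m : ℝ) + 1) / 2 ≤ ∑ k ∈ range (m + 1), cos (k * θ) ^ 2 := by
  have hsq : ∀ k ∈ range (m + 1), cos (k * θ) ^ 2 = 1 / 2 + cos (k * (2 * θ)) / 2 := by
    intro k _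
    rw [cos_sq, mul_left_comm]
  have hD : 0 ≤ ∑ k ∈ range (m + 1), cos (k * (2 * θ)) / 2 := by
    rw [← sum_div]
    exact div_nonneg (Dker_two_mul_nonneg hθ) zero_le_two
  rw [sum_congr rfl hsq, sum_add_distrib, sum_const, card_range, nsmul_eq_mul]
  push_cast
  linarith

theorem centralBinom_sq_mul_succ_le (n : ℕ) : n.centralBinom ^ 2 * (n + 1) ≤ 16 ^ n := by
  induction n with
  | zero => simp
  | succ n ih =>
    have hrec := Nat.succ_mul_centralBinom_succ n
    have hpoly : 4 * (2 * n + 1) ^ 2 * (n + 2) ≤ 16 * (n + 1) ^ 3 := by nlinarith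
    refine Nat.le_of_mul_le_mul_left (c := (n + 1) ^ 2) ?_ (pow_pos n.succ_pos 2)
    calc (n + 1) ^ 2 * ((n + 1).centralBinom ^ 2 * (n + 1 + 1))
        = 4 * (2 * n + 1) ^ 2 * (n + 2) * n.centralBinom ^ 2 := by
          rw [show (n + 1) ^ 2 * ((n + 1).centralBinom ^ 2 * (n + 1 + 1))
            = ((n + 1) * (n + 1).centralBinom) ^ 2 * (n + 2) by ring, hrec]
          ring
      _ ≤ 16 * (n + 1) ^ 3 * n.centralBinom ^ 2 := Nat.mul_le_mul_right _ hpoly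
      _ = 16 * (n + 1) ^ 2 * (n.centralBinom ^ 2 * (n + 1)) := by ring
      _ ≤ 16 * (n + 1) ^ 2 * 16 ^ n := Nat.mul_le_mul_left _ ih
      _ = (n + 1) ^ 2 * 16 ^ (n + 1) := by ring

theorem choose_half_sq_mul_succ_le (k : ℕ) : k.choose (k / 2) ^ 2 * (k + 1) ≤ 2 * 4 ^ k := by
  obtain ⟨n, rfl | rfl⟩ := Nat.even_or_odd' k
  · have hcb := centralBinom_sq_mul_succ_le n
    rw [Nat.centralBinom_eq_two_mul_choose] at hcb
    rw [Nat.mul_div_cancel_left n two_pos, pow_mul]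
    norm_num
    nlinarith
  · have hcb := centralBinom_sq_mul_succ_le (n + 1)
    have hsucc : (n + 1).centralBinom = 2 * (2 * n + 1).choose n := by
      rw [Nat.centralBinom_eq_two_mul_choose, show 2 * (n + 1) = 2 * n + 1 + 1 by ring,
        Nat.choose_succ_succ, Nat.choose_symm_half]
      ring
    have h4 : (4 : ℕ) ^ (2 * n + 1) = 4 * 16 ^ n := by rw [pow_succ, pow_mul]; norm_num; ring
    rw [show (2 * n + 1) / 2 = n by omega, h4]
    rw [hsucc, pow_succ (16 : ℕ)] at hcb
    nlinarith [Nat.zero_le ((2 * n + 1).choose n ^ 2)]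

theorem choose_half_div_two_pow_le (k : ℕ) :
    (k.choose (k / 2) : ℝ) / 2 ^ k ≤ √(2 / (k + 1)) := by
  rw [le_sqrt (by positivity) (by positivity), div_pow, div_le_div_iff₀ (by positivity)
    (by positivity), ← pow_mul, show (2 : ℝ) ^ (k * 2) = 4 ^ k by rw [pow_mul']; norm_num]
  exact_mod_cast choose_half_sq_mul_succ_le k

theorem isAntichain_setOf_sum_mem_Ico {ι : Type*} {a : ι → ℝ} {δ : ℝ} (ha : ∀ i, δ ≤ a i) (x : ℝ) :
    IsAntichain (· ⊆ ·) {s : Finset ι | ∑ i ∈ s, a i ∈ Set.Ico x (x + δ)} := by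
  classical
  intro s hs t ht hne hst
  obtain ⟨i, hit, his⟩ := exists_of_ssubset (ssubset_of_subset_of_ne hst hne)
  have hδ : 0 < δ := by linarith [hs.1, hs.2]
  have hgap : δ ≤ ∑ j ∈ t \ s, a j :=
    (ha i).trans (single_le_sum (fun j _ => hδ.le.trans (ha j)) (mem_sdiff.mpr ⟨hit, his⟩))
  have hsplit := sum_sdiff hst (f := a)
  linarith [hs.1, ht.2]

section LittlewoodOfford

variable {ι : Type*} [Fintype ι]

noncomputable def selectSum (a : ι → ℝ) (e : ι → Bool) : ℝ :=
  ∑ i, (if e i then 1 else 0) * a i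

theorem selectSum_eq_sum_filter (a : ι → ℝ) (e : ι → Bool) :
    selectSum a e = ∑ i ∈ univ.filter (fun i => e i = true), a i := by
  rw [sum_filter, selectSum]
  exact sum_congr rfl fun i _ => by split_ifs <;> simp

theorem selectSum_eq_selectSum_abs_add (a : ι → ℝ) (e : ι → Bool) :
    selectSum a e = selectSum (fun i => |a i|) (fun i => xor (e i) (decide (a i < 0)))
      + ∑ i, min (a i) 0 := by
  rw [selectSum, selectSum, ← sum_add_distrib]
  refine sum_congr rfl fun i _ => ?_
  rcases lt_or_ge (a i) 0 with hneg | hnonneg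
  · rw [abs_of_neg hneg, min_eq_left hneg.le]
    cases e i <;> simp [hneg]
  · rw [abs_of_nonneg hnonneg, min_eq_right hnonneg]
    cases e i <;> simp [not_lt.mpr hnonneg]

theorem selectSum_not (a : ι → ℝ) (e : ι → Bool) :
    selectSum a (fun i => !e i) = ∑ i, a i - selectSum a e := by
  rw [selectSum, selectSum, ← sum_sub_distrib]
  exact sum_congr rfl fun i _ => by cases e i <;> simp

variable [DecidableEq ι]

theorem card_selectSum_mem_Ico_le_of_le {a : ι → ℝ} {δ : ℝ} (ha : ∀ i, δ ≤ a i) (x : ℝ) :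
    #{e | selectSum a e ∈ Set.Ico x (x + δ)} ≤ (Fintype.card ι).choose (Fintype.card ι / 2) := by
  set support : (ι → Bool) → Finset ι := fun e => univ.filter (fun i => e i = true)
  have hinj : Function.Injective support := by
    intro e e' h
    funext i
    simpa [support, Bool.coe_iff_coe] using congrArg (i ∈ ·) h
  rw [← card_image_of_injective _ hinj]
  refine IsAntichain.sperner ((isAntichain_setOf_sum_mem_Ico ha x).subset ?_)
  rw [coe_image]
  rintro _ ⟨e, he, rfl⟩
  rw [mem_coe, mem_filter, selectSum_eq_sum_filter] at he
  exact he.2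

theorem card_selectSum_mem_Ico_le {a : ι → ℝ} {δ : ℝ} (ha : ∀ i, δ ≤ |a i|) (x : ℝ) :
    #{e | selectSum a e ∈ Set.Ico x (x + δ)} ≤ (Fintype.card ι).choose (Fintype.card ι / 2) := by
  set c := ∑ i, min (a i) 0
  let flip : Equiv.Perm (ι → Bool) := Function.Involutive.toPerm
    (fun e i => xor (e i) (decide (a i < 0))) (fun e => by funext i; simp)
  calc #{e | selectSum a e ∈ Set.Ico x (x + δ)}
      = #{e | selectSum (fun i => |a i|) e ∈ Set.Ico (x - c) (x - c + δ)} := by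
        refine card_equiv flip fun e => ?_
        have hshift : selectSum a e = selectSum (fun i => |a i|) (flip e) + c :=
          selectSum_eq_selectSum_abs_add a e
        simp only [mem_filter, mem_univ, true_and, Set.mem_Ico, hshift]
        constructor <;> intro h <;> constructor <;> linarith [h.1, h.2]
    _ ≤ _ := card_selectSum_mem_Ico_le_of_le ha _

theorem card_selectSum_mem_Ico_nat_mul_le {a : ι → ℝ} {δ : ℝ} (ha : ∀ i, δ ≤ |a i|) (x : ℝ)
    (n : ℕ) : #{e | selectSum a e ∈ Set.Ico x (x + n * δ)}
      ≤ n * (Fintype.card ι).choose (Fintype.card ι / 2) := by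
  induction n with
  | zero => simp
  | succ n ih =>
    have hcover : #{e | selectSum a e ∈ Set.Ico x (x + (n + 1 : ℕ) * δ)}
        ≤ #(({e | selectSum a e ∈ Set.Ico x (x + n * δ)} : Finset (ι → Bool))
            ∪ ({e | selectSum a e ∈ Set.Ico (x + n * δ) (x + n * δ + δ)} : Finset (ι → Bool))) := by
      refine card_le_card fun e he => ?_
      simp only [mem_union, mem_filter, mem_univ, true_and, Set.mem_Ico] at he ⊢
      push_cast at he
      by_cases hlt : selectSum a e < x + n * δ
      · exact Or.inl ⟨he.1, hlt⟩
      · exact Or.inr ⟨not_lt.mp hlt, by linarith [he.2]⟩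
    calc _ ≤ _ := hcover
      _ ≤ _ := card_union_le _ _
      _ ≤ _ := add_le_add ih (card_selectSum_mem_Ico_le ha _)
      _ = _ := by ring

theorem card_selectSum_mem_le_of_subtype (a : ι → ℝ) (p : ι → Prop) [DecidablePred p]
    (J : Set ℝ) [DecidablePred (· ∈ J)] (B : ℕ)
    (hB : ∀ z, #{f : {i // p i} → Bool | selectSum (fun i : {i // p i} => a i) f + z ∈ J} ≤ B) :
    #{e | selectSum a e ∈ J} ≤ 2 ^ Fintype.card {i // ¬ p i} * B := by
  let E := Equiv.piEquivPiSubtypeProd p (fun _ => Bool)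
  have hsplit : ∀ f g, selectSum a (E.symm (f, g))
      = selectSum (fun i : {i // p i} => a i) f + selectSum (fun i : {i // ¬ p i} => a i) g := by
    intro f g
    simp only [selectSum, ← Fintype.sum_subtype_add_sum_subtype p, E,
      Equiv.piEquivPiSubtypeProd_symm_apply]
    congr 1 <;> refine sum_congr rfl fun i _ => ?_
    · rw [dif_pos i.2]
    · rw [dif_neg i.2]
  calc #{e | selectSum a e ∈ J}
      = #{q | selectSum a (E.symm q) ∈ J} :=
        card_equiv E fun e => by simp only [mem_filter, mem_univ, true_and, E.symm_apply_apply]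
    _ = ∑ g, #{f | selectSum a (E.symm (f, g)) ∈ J} := by
        simp only [card_filter, Fintype.sum_prod_type_right]
    _ ≤ ∑ _g : {i // ¬ p i} → Bool, B := sum_le_sum fun g _ => by simpa only [hsplit] using hB _
    _ = 2 ^ Fintype.card {i // ¬ p i} * B := by simp

theorem card_selectSum_mem_Ico_le_of_subtype {a : ι → ℝ} {δ : ℝ} (p : ι → Prop) [DecidablePred p]
    (ha : ∀ i, p i → δ ≤ |a i|) (x : ℝ) (n : ℕ) :
    #{e | selectSum a e ∈ Set.Ico x (x + n * δ)} ≤ 2 ^ Fintype.card {i // ¬ p i}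
      * (n * (Fintype.card {i // p i}).choose (Fintype.card {i // p i} / 2)) := by
  refine card_selectSum_mem_le_of_subtype a p (Set.Ico x (x + n * δ)) _ fun z => ?_
  have hshift : ∀ f : {i // p i} → Bool,
      selectSum (fun i : {i // p i} => a i) f + z ∈ Set.Ico x (x + n * δ) ↔ selectSum (fun i : {i // p i} => a i) f ∈ Set.Ico (x - z) (x - z + n * δ) := by
    intro f
    simp only [Set.mem_Ico]
    constructor <;> intro h <;> constructor <;> linarith [h.1, h.2]
  simp only [hshift]
  exact card_selectSum_mem_Ico_nat_mul_le (a := fun i : {i // p i} => a i) (fun i => ha i i.2) _ n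

theorem card_selectSum_mem_Ico_le_sqrt {a : ι → ℝ} {δ : ℝ} (p : ι → Prop) [DecidablePred p]
    (ha : ∀ i, p i → δ ≤ |a i|) (x : ℝ) (n : ℕ) :
    (#{e | selectSum a e ∈ Set.Ico x (x + n * δ)} : ℝ)
      ≤ n * √(2 / (Fintype.card {i // p i} + 1)) * 2 ^ Fintype.card ι := by
  set k := Fintype.card {i // p i}
  have hcard : 2 ^ Fintype.card ι = (2 : ℝ) ^ Fintype.card {i // ¬ p i} * 2 ^ k := by
    rw [← pow_add, Fintype.card_subtype_compl, Nat.sub_add_cancel (Fintype.card_subtype_le p)]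
  have hchoose : (k.choose (k / 2) : ℝ) ≤ √(2 / (k + 1)) * 2 ^ k :=
    (div_le_iff₀ (by positivity)).mp (choose_half_div_two_pow_le k)
  calc (#{e | selectSum a e ∈ Set.Ico x (x + n * δ)} : ℝ)
      ≤ 2 ^ Fintype.card {i // ¬ p i} * (n * k.choose (k / 2)) := by
        exact_mod_cast card_selectSum_mem_Ico_le_of_subtype p ha x n
    _ ≤ 2 ^ Fintype.card {i // ¬ p i} * (n * (√(2 / (k + 1)) * 2 ^ k)) := by gcongr
    _ = n * √(2 / (k + 1)) * 2 ^ Fintype.card ι := by rw [hcard]; ring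

end LittlewoodOfford

theorem card_le_three_mul_card_half_le_abs {ι : Type*} [Fintype ι] (a : ι → ℝ)
    (ha : ∀ i, |a i| ≤ 1) (hsum : (Fintype.card ι : ℝ) ≤ 2 * ∑ i, a i ^ 2) :
    Fintype.card ι ≤ 3 * #{i | 1 / 2 ≤ |a i|} := by
  have hlarge : ∑ i ∈ univ.filter (fun i => 1 / 2 ≤ |a i|), a i ^ 2
      ≤ #{i | 1 / 2 ≤ |a i|} := by
    rw [← mul_one (#{i | 1 / 2 ≤ |a i|} : ℝ), ← nsmul_eq_mul, ← sum_const]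
    refine sum_le_sum fun i _ => ?_
    rw [← sq_abs]
    nlinarith [ha i, abs_nonneg (a i)]
  have hsmall : ∑ i ∈ univ.filter (fun i => ¬ 1 / 2 ≤ |a i|), a i ^ 2
      ≤ #{i | ¬ 1 / 2 ≤ |a i|} * (1 / 4) := by
    rw [← nsmul_eq_mul, ← sum_const]
    refine sum_le_sum fun i hi => ?_
    have : |a i| < 1 / 2 := not_le.mp (mem_filter.mp hi).2
    rw [← sq_abs]
    nlinarith [abs_nonneg (a i)]
  have htotal : (#{i | 1 / 2 ≤ |a i|} : ℝ) + #{i | ¬ 1 / 2 ≤ |a i|} = Fintype.card ι := by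
    exact_mod_cast card_filter_add_card_filter_not _
  rw [← sum_filter_add_sum_filter_not univ (fun i => 1 / 2 ≤ |a i|)] at hsum
  have : (Fintype.card ι : ℝ) ≤ 3 * #{i | 1 / 2 ≤ |a i|} := by linarith
  exact_mod_cast this

theorem card_abs_selectSum_cos_sub_le {m r : ℕ} {θ : ℝ} (hθ : m * θ = r * π) (z : ℝ) :
    (#{e : Fin (m + 1) → Bool | |selectSum (fun k : Fin (m + 1) => cos (k * θ)) e - z| ≤ 6} : ℝ)
      ≤ 25 * √(6 / (m + 1)) * 2 ^ (m + 1) := by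
  set a : Fin (m + 1) → ℝ := fun k => cos (k * θ)
  set K := Fintype.card {k // 1 / 2 ≤ |a k|}
  have hlarge : m + 1 ≤ 3 * K := by
    rw [show K = _ from Fintype.card_subtype _]
    refine (Fintype.card_fin (m + 1)).symm.trans_le (card_le_three_mul_card_half_le_abs a
      (fun k => abs_cos_le_one _) ?_)
    rw [Fin.sum_univ_eq_sum_range (fun k => cos (k * θ) ^ 2), Fintype.card_fin]
    push_cast
    linarith [sum_cos_sq_ge hθ]
  have hsqrt : √(2 / (K + 1)) ≤ √(6 / (m + 1)) := by
    refine sqrt_le_sqrt ?_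
    rw [div_le_div_iff₀ (by positivity) (by positivity)]
    have : ((m + 1 : ℕ) : ℝ) ≤ 3 * K := by exact_mod_cast hlarge
    push_cast at this
    linarith
  have hball : #{e | |selectSum a e - z| ≤ 6}
      ≤ #{e | selectSum a e ∈ Set.Ico (z - 6) (z - 6 + (25 : ℕ) * (1 / 2))} := by
    refine card_le_card fun e he => ?_
    simp only [mem_filter, mem_univ, true_and, Set.mem_Ico, abs_le] at he ⊢
    push_cast
    constructor <;> linarith [he.1, he.2]
  calc (#{e | |selectSum a e - z| ≤ 6} : ℝ)
      ≤ #{e | selectSum a e ∈ Set.Ico (z - 6) (z - 6 + (25 : ℕ) * (1 / 2))} := by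
        exact_mod_cast hball
    _ ≤ (25 : ℕ) * √(2 / (K + 1)) * 2 ^ Fintype.card (Fin (m + 1)) :=
        card_selectSum_mem_Ico_le_sqrt _ (fun _ hk => hk) _ _
    _ ≤ 25 * √(6 / (m + 1)) * 2 ^ (m + 1) := by
        rw [Fintype.card_fin]
        push_cast
        gcongr

theorem card_filter_le_add_add {Ω : Type*} [Fintype Ω] {P Q R S : Ω → Prop} [DecidablePred P]
    [DecidablePred Q] [DecidablePred R] [DecidablePred S] (h : ∀ ω, P ω → Q ω ∨ R ω ∨ S ω) :
    #{ω | P ω} ≤ #{ω | Q ω} + #{ω | R ω} + #{ω | S ω} := by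
  classical
  calc #{ω | P ω}
      ≤ #(({ω | Q ω} : Finset Ω) ∪ ({ω | R ω} : Finset Ω) ∪ ({ω | S ω} : Finset Ω)) := by
        refine card_le_card fun ω hω => ?_
        simp only [mem_union, mem_filter, mem_univ, true_and] at hω ⊢
        rcases h ω hω with hq | hr | hs
        exacts [Or.inl (Or.inl hq), Or.inl (Or.inr hr), Or.inr hs]
    _ ≤ #(({ω | Q ω} : Finset Ω) ∪ ({ω | R ω} : Finset Ω)) + #{ω | S ω} := card_union_le _ _
    _ ≤ _ := by gcongr; exact card_union_le _ _

/-- `τ` puts `u > 0` on about half of `Ω`, and `σ` splits that half evenly between `v < 0` and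
`v > 2 c`. -/
theorem card_le_four_mul_card_pos_neg {Ω : Type*} [Fintype Ω] (σ τ : Equiv.Perm Ω)
    {u v : Ω → ℝ} {c d : ℝ} (hσu : ∀ ω, u (σ ω) = u ω) (hσv : ∀ ω, v (σ ω) = 2 * c - v ω)
    (hτu : ∀ ω, u (τ ω) = d - u ω) :
    Fintype.card Ω ≤ 4 * #{ω | 0 < u ω ∧ v ω < 0} + #{ω | |u ω| ≤ |d|}
      + 2 * #{ω | |v ω| ≤ 2 * |c|} := by
  have hτ : #{ω | 0 < u ω} = #{ω | u ω < d} :=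
    card_equiv τ fun ω => by
      simp only [mem_filter, mem_univ, true_and, hτu]
      constructor <;> intro h <;> linarith
  have hσ : #{ω | 0 < u ω ∧ v ω < 0} = #{ω | 0 < u ω ∧ 2 * c < v ω} :=
    card_equiv σ fun ω => by
      simp only [mem_filter, mem_univ, true_and, hσu, hσv]
      constructor <;> rintro ⟨h1, h2⟩ <;> exact ⟨h1, by linarith⟩
  have hcover_u : #{ω : Ω | True} ≤ #{ω | 0 < u ω} + #{ω | u ω < d} + #{ω | |u ω| ≤ |d|} := by
    refine card_filter_le_add_add fun ω _ => ?_
    by_contra! h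
    obtain ⟨hu0, hud, habs⟩ := h
    exact (not_lt.mpr (abs_le_abs_of_nonpos hu0 hud)) habs
  have hcover_v : #{ω | 0 < u ω} ≤ #{ω | 0 < u ω ∧ v ω < 0} + #{ω | 0 < u ω ∧ 2 * c < v ω}
      + #{ω | |v ω| ≤ 2 * |c|} := by
    refine card_filter_le_add_add fun ω hu => ?_
    by_contra! h
    obtain ⟨hv0, hvc, habs⟩ := h
    have hv : 0 ≤ v ω ∧ v ω ≤ 2 * c := ⟨hv0 hu, hvc hu⟩
    rw [abs_of_nonneg hv.1] at habs
    linarith [le_abs_self c]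
  rw [filter_true, card_univ] at hcover_u
  omega

theorem selectSum_cos_comp_rev {m r : ℕ} {w : ℝ} (hw : m * w = r * π) (e : Fin (m + 1) → Bool) :
    selectSum (fun k : Fin (m + 1) => cos (k * w)) (fun k => e k.rev)
      = (-1) ^ r * selectSum (fun k : Fin (m + 1) => cos (k * w)) e := by
  rw [selectSum, selectSum, mul_sum, ← Equiv.sum_comp Fin.revPerm]
  refine sum_congr rfl fun k _ => ?_
  have hk : (k : ℕ) ≤ m := Nat.lt_succ_iff.mp k.isLt
  have harg : ((k.rev : ℕ) : ℝ) * w = r * π - k * w := by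
    rw [Fin.val_rev, show m + 1 - (k + 1) = m - k by omega, Nat.cast_sub hk]
    linear_combination hw
  rw [Fin.revPerm_apply, Fin.rev_rev, harg, cos_nat_mul_pi_sub]
  ring

theorem F_eq_Dker_sub_selectSum (n m : ℕ) (e : Fin (m + 1) → Bool) (x : ℝ) :
    F n m e x = Dker n x - selectSum (fun k : Fin (m + 1) => cos (k * x)) e := rfl

theorem card_abs_F_le {n m r : ℕ} {θ B : ℝ} (hθ : m * θ = r * π) (hB : B ≤ 6) :
    (#{e | |F n m e θ| ≤ B} : ℝ) ≤ 25 * √(6 / (m + 1)) * 2 ^ (m + 1) := by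
  refine le_trans ?_ (card_abs_selectSum_cos_sub_le hθ (Dker n θ))
  refine Nat.cast_le.mpr (card_le_card fun e he => ?_)
  rw [mem_filter] at he ⊢
  rw [F_eq_Dker_sub_selectSum, abs_sub_comm] at he
  exact ⟨mem_univ e, he.2.trans hB⟩

theorem card_F_pos_neg_ge {n m r s : ℕ} {x y : ℝ} (hx : x ∈ Set.Icc (π / 2) π)
    (hy : y ∈ Set.Icc (π / 2) π) (hmx : m * x = r * π) (hmy : m * y = s * π) (hr : Even r)
    (hs : Odd s) :
    (1 / 4 - 75 / 4 * √(6 / (m + 1))) * 2 ^ (m + 1) ≤ #{e | 0 < F n m e x ∧ F n m e y < 0} := by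
  let σ : Equiv.Perm (Fin (m + 1) → Bool) :=
    Function.Involutive.toPerm (fun e k => e k.rev) fun e => by funext k; simp
  let τ : Equiv.Perm (Fin (m + 1) → Bool) :=
    Function.Involutive.toPerm (fun e k => !e k) fun e => by funext k; simp
  have hσu : ∀ e, F n m (σ e) x = F n m e x := fun e => by
    simp only [F_eq_Dker_sub_selectSum]
    rw [show σ e = fun k => e k.rev from rfl, selectSum_cos_comp_rev hmx, hr.neg_one_pow, one_mul]
  have hσv : ∀ e, F n m (σ e) y = 2 * Dker n y - F n m e y := fun e => by
    simp only [F_eq_Dker_sub_selectSum]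
    rw [show σ e = fun k => e k.rev from rfl, selectSum_cos_comp_rev hmy, hs.neg_one_pow]
    ring
  have hτu : ∀ e, F n m (τ e) x = (2 * Dker n x - Dker m x) - F n m e x := fun e => by
    simp only [F_eq_Dker_sub_selectSum]
    rw [show τ e = fun k => !e k from rfl, selectSum_not,
      Fin.sum_univ_eq_sum_range (fun k => cos (k * x))]
    simp only [Dker]
    ring
  have hskel := card_le_four_mul_card_pos_neg σ τ (u := fun e => F n m e x)
    (v := fun e => F n m e y) hσu hσv hτu
  have hd : |2 * Dker n x - Dker m x| ≤ 6 := by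
    have := abs_Dker_le_two_of_mem_Icc hx n
    have := abs_Dker_le_two_of_mem_Icc hx m
    calc |2 * Dker n x - Dker m x| ≤ |2 * Dker n x| + |Dker m x| := abs_sub _ _
      _ ≤ 6 := by rw [abs_mul, abs_two]; linarith
  have hc : 2 * |Dker n y| ≤ 6 := by linarith [abs_Dker_le_two_of_mem_Icc hy n]
  have hU := card_abs_F_le (n := n) hmx hd
  have hV := card_abs_F_le (n := n) hmy hc
  rw [Fintype.card_fun, Fintype.card_bool, Fintype.card_fin] at hskel
  have hskelR := (Nat.cast_le (α := ℝ)).mpr hskel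
  push_cast at hskelR
  linarith

theorem exists_F_eq_zero_mem_uIcc {n m : ℕ} (e : Fin (m + 1) → Bool) {x y : ℝ}
    (hx : 0 < F n m e x) (hy : F n m e y < 0) : ∃ z ∈ Set.uIcc x y, F n m e z = 0 := by
  have hcont : Continuous (F n m e) := by unfold F Dker; fun_prop
  exact intermediate_value_uIcc hcont.continuousOn (Set.mem_uIcc.mpr (Or.inr ⟨hy.le, hx.le⟩))

theorem pi_mul_div_mem_Icc {m r : ℕ} (h1 : (m : ℝ) / 2 ≤ r) (h2 : (r : ℝ) ≤ m) (hm : 0 < m) :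
    π * r / m ∈ Set.Icc (π / 2) π := by
  have hm' : (0 : ℝ) < m := by exact_mod_cast hm
  constructor
  · rw [le_div_iff₀ hm']; nlinarith [pi_pos]
  · rw [div_le_iff₀ hm']; nlinarith [pi_pos]

open scoped Classical in
theorem card_exists_F_eq_zero_ge (n : ℕ) {m j : ℕ} (hj1 : (m : ℝ) / 2 ≤ j) (hj2 : (j : ℝ) ≤ m - 1) :
    (1 / 4 - 75 / 4 * √(6 / (m + 1))) * 2 ^ (m + 1)
      ≤ #{e | ∃ x ∈ Set.Icc (π * j / m) (π * (j + 1) / m), F n m e x = 0} := by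
  have hm : 0 < m := by exact_mod_cast (show (0 : ℝ) < m by linarith)
  have ha := pi_mul_div_mem_Icc (r := j) hj1 (by linarith) hm
  have hb := pi_mul_div_mem_Icc (r := j + 1) (by push_cast; linarith) (by push_cast; linarith) hm
  have hma : m * (π * j / m) = j * π := by field_simp
  have hmb : m * (π * (j + 1 : ℕ) / m) = (j + 1 : ℕ) * π := by field_simp
  have hab : π * j / m ≤ π * (j + 1 : ℕ) / m := by gcongr; linarith
  have hcount : ∀ x y, Set.uIcc x y = Set.Icc (π * j / m) (π * (j + 1 : ℕ) / m) →
      #{e | 0 < F n m e x ∧ F n m e y < 0}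
        ≤ #{e | ∃ z ∈ Set.Icc (π * j / m) (π * (j + 1) / m), F n m e z = 0} := fun x y hxy => by
    refine card_le_card fun e he => ?_
    rw [mem_filter] at he ⊢
    refine ⟨mem_univ e, ?_⟩
    push_cast at hxy
    rw [← hxy]
    exact exists_F_eq_zero_mem_uIcc e he.2.1 he.2.2
  rcases Nat.even_or_odd j with hj | hj
  · exact (card_F_pos_neg_ge (n := n) ha hb hma hmb hj hj.add_one).trans
      (by exact_mod_cast hcount _ _ (Set.uIcc_of_le hab))
  · exact (card_F_pos_neg_ge (n := n) hb ha hmb hma hj.add_one hj).trans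
      (by exact_mod_cast hcount _ _ (Set.uIcc_of_ge hab))

open scoped Classical in
/-- For every `ε > 0` there is `m₀` such that for all `m ≥ m₀`, `n ≥ m` and every integer
`j` with `m/2 ≤ j ≤ m - 1`: if `f ~ F_{n,m}` and `I = [πj/m, π(j+1)/m]` then
`P(f has a zero in I) ≥ 1/4 - ε`, where the probability is computed as the proportion
of the `2^(m+1)` Bernoulli outcomes. -/
theorem stmt14 (εp : ℝ) (hεp : 0 < εp) :
    ∃ m₀ : ℕ, ∀ m n j : ℕ, m₀ ≤ m → m ≤ n →
      (m : ℝ) / 2 ≤ (j : ℝ) → (j : ℝ) ≤ (m : ℝ) - 1 →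
      1 / 4 - εp ≤
        (∑ e : Fin (m + 1) → Bool,
          if ∃ x ∈ Set.Icc (π * j / m) (π * (j + 1) / m), F n m e x = 0 then (1 : ℝ) else 0) /
          2 ^ (m + 1) := by
  refine ⟨⌈6 * (75 / (4 * εp)) ^ 2⌉₊, fun m n j hm _ hj1 hj2 => ?_⟩
  have hm_large : 6 * (75 / (4 * εp)) ^ 2 ≤ m := (Nat.le_ceil _).trans (by exact_mod_cast hm)
  have herror : 75 / 4 * √(6 / (m + 1)) ≤ εp := by
    have hsqrt : √(6 / (m + 1)) ≤ 4 * εp / 75 := by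
      rw [sqrt_le_left (by positivity), div_le_iff₀ (by positivity)]
      have : 6 * (75 / (4 * εp)) ^ 2 * (4 * εp / 75) ^ 2 = 6 := by field_simp
      nlinarith [sq_nonneg (4 * εp / 75)]
    linarith
  rw [sum_boole, le_div_iff₀ (by positivity)]
  calc (1 / 4 - εp) * 2 ^ (m + 1) ≤ (1 / 4 - 75 / 4 * √(6 / (m + 1))) * 2 ^ (m + 1) := by
        gcongr
    _ ≤ _ := card_exists_F_eq_zero_ge n hj1 hj2
end

section
/- Let δ ∈ (0, 1/4), let n be a natural number, and let I be an interval contained in [2^{15}·(δ n)^{-1}, π] of length |I| = δ/n. Let g be a {0,1}-cosine polynomial with deg(g) ≤ n and set f = D_n − g. If there exists a point x_0 ∈ I with |g'(x_0)| > 2^{7}·n·s(x_0) (i.e. I is not contained in E'_n(g)), then the number of zeros of f in I satisfies Z_I(f) ≤ (log 3n)/(log(1/δ)) + 1. -/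
/-!
Write `f = D_n - g = ∑_{k ≤ n} c_k cos (k x)` with `c_k = 1 - ε_k ∈ {0, 1}`. Summation by parts
gives `|D_n'(x)| ≤ 4 n s(x)`, so `|f'(x₀)| ≥ 124 n s(x₀) ≥ 62 n`. On the other hand, if `f` has
`r + 1` zeros in `I`, repeated use of Rolle's theorem puts `r - j` zeros of `f^{(j+1)}` in `I`,
and integrating back from `|f^{(r+1)}| ≤ (n + 1) n^{r+1}` with the mean value theorem gives
`|f'| ≤ |I|^r (n + 1) n^{r+1} = δ^r (n + 1) n` on `I`. Comparing the two bounds, `(1/δ)^r ≤ 3n`.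
-/

open Real

/-- `zeros f S` : the number of zeros of `f` in the set `S`. -/
noncomputable def zeros (f : ℝ → ℝ) (S : Set ℝ) : ℕ := {x ∈ S | f x = 0}.ncard

open Finset

theorem exists_finset_hasDerivAt_eq_zero {h h' : ℝ → ℝ} (hh : ∀ x, HasDerivAt h (h' x) x)
    (N : ℕ) {a b : ℝ} {T : Finset ℝ} (hTab : ↑T ⊆ Set.Icc a b) (hT : T.card = N + 1)
    (hT0 : ∀ z ∈ T, h z = 0) :
    ∃ S : Finset ℝ, S.card = N ∧ ↑S ⊆ Set.Icc a b ∧ ∀ y ∈ S, h' y = 0 := by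
  induction N generalizing b T with
  | zero => exact ⟨∅, rfl, by simp, by simp⟩
  | succ N ih =>
    have hTne : T.Nonempty := card_pos.mp (by omega)
    set m := T.max' hTne
    have hmT : m ∈ T := T.max'_mem hTne
    have hT' : (T.erase m).card = N + 1 := by rw [card_erase_of_mem hmT, hT]; rfl
    have hT'ne : (T.erase m).Nonempty := card_pos.mp (by omega)
    set m' := (T.erase m).max' hT'ne
    have hm'T : m' ∈ T.erase m := max'_mem _ hT'ne
    have hm'm : m' < m :=
      (T.le_max' _ (mem_of_mem_erase hm'T)).lt_of_ne (ne_of_mem_erase hm'T)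
    obtain ⟨S, hS, hSab, hS0⟩ := ih (b := m') (T := T.erase m)
      (fun z hz => ⟨(hTab (mem_of_mem_erase hz)).1, le_max' _ _ hz⟩) hT'
      (fun z hz => hT0 z (mem_of_mem_erase hz))
    obtain ⟨c, hc, hc0⟩ := exists_hasDerivAt_eq_zero hm'm
      (HasDerivAt.continuousOn fun x _ => hh x)
      (by rw [hT0 m' (mem_of_mem_erase hm'T), hT0 m hmT]) fun x _ => hh x
    have hcS : c ∉ S := fun hcS => (hSab hcS).2.not_gt hc.1
    refine ⟨insert c S, by rw [card_insert_of_notMem hcS, hS], ?_, ?_⟩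
    · have hm'ab := hTab (mem_of_mem_erase hm'T)
      rw [coe_insert]
      exact Set.insert_subset ⟨hm'ab.1.trans hc.1.le, hc.2.le.trans (hTab hmT).2⟩
        (hSab.trans (Set.Icc_subset_Icc_right hm'ab.2))
    · simpa [hc0] using hS0

theorem abs_le_mul_of_hasDerivAt_of_eq_zero {h h' : ℝ → ℝ} (hh : ∀ x, HasDerivAt h (h' x) x)
    {a b C : ℝ} (hC : ∀ x ∈ Set.Icc a b, |h' x| ≤ C) {z : ℝ} (hz : z ∈ Set.Icc a b)
    (hz0 : h z = 0) {x : ℝ} (hx : x ∈ Set.Icc a b) : |h x| ≤ (b - a) * C := by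
  have hmvt := Convex.norm_image_sub_le_of_norm_hasDerivWithin_le
    (fun y _ => (hh y).hasDerivWithinAt) hC (convex_Icc a b) hz hx
  rw [hz0, sub_zero, Real.norm_eq_abs, Real.norm_eq_abs] at hmvt
  have hxz : |x - z| ≤ b - a :=
    abs_sub_le_iff.2 ⟨by linarith [hx.2, hz.1], by linarith [hx.1, hz.2]⟩
  calc |h x| ≤ C * |x - z| := hmvt
    _ ≤ C * (b - a) := mul_le_mul_of_nonneg_left hxz ((abs_nonneg _).trans (hC z hz))
    _ = (b - a) * C := mul_comm _ _

theorem abs_le_pow_mul_of_card_zeros {F : ℕ → ℝ → ℝ}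
    (hF : ∀ j x, HasDerivAt (F j) (F (j + 1) x) x) {a b M : ℝ} (r : ℕ)
    (hM : ∀ x ∈ Set.Icc a b, |F (r + 1) x| ≤ M) {T : Finset ℝ} (hTab : ↑T ⊆ Set.Icc a b)
    (hT0 : ∀ z ∈ T, F 0 z = 0) (hr : r < T.card) {x : ℝ} (hx : x ∈ Set.Icc a b) :
    |F 1 x| ≤ (b - a) ^ r * M := by
  induction r generalizing F T x with
  | zero => simpa using hM x hx
  | succ r ih =>
    obtain ⟨S, hS, hSab, hS0⟩ :=
      exists_finset_hasDerivAt_eq_zero (hF 0) (T.card - 1) hTab (by omega) hT0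
    obtain ⟨z, hz⟩ : S.Nonempty := card_pos.mp (by omega)
    have hF2 : ∀ y ∈ Set.Icc a b, |F 2 y| ≤ (b - a) ^ r * M := fun y hy =>
      ih (F := fun j => F (j + 1)) (fun j => hF (j + 1)) hM hSab hS0 (by omega) hy
    calc |F 1 x| ≤ (b - a) * ((b - a) ^ r * M) :=
          abs_le_mul_of_hasDerivAt_of_eq_zero (hF 1) hF2 (hSab hz) (hS0 z hz) hx
      _ = (b - a) ^ (r + 1) * M := by ring

theorem sum_range_sin_mul_mul_two_sin_half (x : ℝ) (m : ℕ) :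
    (∑ k ∈ range m, sin (k * x)) * (2 * sin (x / 2)) = cos (x / 2) - cos (m * x - x / 2) := by
  induction m with
  | zero => simp
  | succ m ih =>
    rw [sum_range_succ, add_mul, ih, Nat.cast_succ,
      show ((m : ℝ) + 1) * x - x / 2 = m * x + x / 2 by ring, cos_add,
      show (m : ℝ) * x - x / 2 = m * x + -(x / 2) by ring, cos_add, cos_neg, sin_neg]
    ring

theorem abs_sum_range_sin_le {x : ℝ} (hx : 0 < sin (x / 2)) (m : ℕ) :
    |∑ k ∈ range m, sin (k * x)| ≤ 2 * sfun x := by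
  have h := congrArg abs (sum_range_sin_mul_mul_two_sin_half x m)
  rw [abs_mul, abs_of_pos (by positivity : 0 < 2 * sin (x / 2))] at h
  have h2 : |cos (x / 2) - cos (m * x - x / 2)| ≤ 2 := by
    linarith [abs_sub (cos (x / 2)) (cos (m * x - x / 2)), abs_cos_le_one (x / 2),
      abs_cos_le_one (m * x - x / 2)]
  rw [sfun, ← div_eq_mul_inv, le_div_iff₀ (by positivity)]
  linarith

theorem abs_sum_range_natCast_mul_sin_le {x : ℝ} (hx : 0 < sin (x / 2)) (n : ℕ) :
    |∑ k ∈ range (n + 1), (k : ℝ) * sin (k * x)| ≤ 4 * n * sfun x := by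
  have hparts := sum_range_by_parts (fun k : ℕ => (k : ℝ)) (fun k => sin (k * x)) (n + 1)
  simp only [smul_eq_mul, add_tsub_cancel_right, Nat.cast_succ, add_sub_cancel_left,
    one_mul] at hparts
  rw [hparts]
  have hS := abs_sum_range_sin_le hx
  calc _ ≤ |(n : ℝ) * ∑ k ∈ range (n + 1), sin (k * x)|
          + ∑ i ∈ range n, |∑ k ∈ range (i + 1), sin (k * x)| :=
        (abs_sub _ _).trans (add_le_add_right (abs_sum_le_sum_abs _ _) _)
    _ ≤ n * (2 * sfun x) + ∑ i ∈ range n, 2 * sfun x := by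
        rw [abs_mul, Nat.abs_cast]
        gcongr with i
        exacts [hS _, hS _]
    _ = 4 * n * sfun x := by rw [sum_const, card_range, nsmul_eq_mul]; ring

/-- The `j`-th derivative of `∑_{k ≤ n} c_k cos (k x)`, via `cos⁽ʲ⁾ y = cos (y + j π / 2)`. -/
noncomputable def cosPolyDeriv (c : ℕ → ℝ) (n j : ℕ) (x : ℝ) : ℝ :=
  ∑ k ∈ range (n + 1), c k * (k : ℝ) ^ j * cos (k * x + j * (π / 2))

theorem hasDerivAt_cosPolyDeriv (c : ℕ → ℝ) (n j : ℕ) (x : ℝ) :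
    HasDerivAt (cosPolyDeriv c n j) (cosPolyDeriv c n (j + 1) x) x := by
  unfold cosPolyDeriv
  refine HasDerivAt.fun_sum fun k _ => ?_
  have hlin : HasDerivAt (fun y : ℝ => k * y + j * (π / 2)) k x := by
    simpa using ((hasDerivAt_id x).const_mul (k : ℝ)).add_const ((j : ℝ) * (π / 2))
  refine (((hasDerivAt_cos _).comp x hlin).const_mul (c k * (k : ℝ) ^ j)).congr_deriv ?_
  rw [Nat.cast_succ, show (k : ℝ) * x + (j + 1) * (π / 2) = k * x + j * (π / 2) + π / 2 by ring,
    cos_add_pi_div_two]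
  ring

theorem cosPolyDeriv_zero (c : ℕ → ℝ) (n : ℕ) (x : ℝ) :
    cosPolyDeriv c n 0 x = ∑ k ∈ range (n + 1), c k * cos (k * x) := by
  simp [cosPolyDeriv]

theorem cosPolyDeriv_one (c : ℕ → ℝ) (n : ℕ) (x : ℝ) :
    cosPolyDeriv c n 1 x = -∑ k ∈ range (n + 1), c k * k * sin (k * x) := by
  simp [cosPolyDeriv, cos_add_pi_div_two, ← sum_neg_distrib]

theorem cosPolyDeriv_sub (c d : ℕ → ℝ) (n j : ℕ) (x : ℝ) :
    cosPolyDeriv (fun k => c k - d k) n j x = cosPolyDeriv c n j x - cosPolyDeriv d n j x := by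
  simp only [cosPolyDeriv, ← sum_sub_distrib, sub_mul]

theorem abs_cosPolyDeriv_le {c : ℕ → ℝ} (hc : ∀ k, |c k| ≤ 1) (n j : ℕ) (x : ℝ) :
    |cosPolyDeriv c n j x| ≤ (n + 1) * n ^ j := by
  calc |cosPolyDeriv c n j x|
      ≤ ∑ k ∈ range (n + 1), |c k * (k : ℝ) ^ j * cos (k * x + j * (π / 2))| :=
        abs_sum_le_sum_abs _ _
    _ ≤ ∑ k ∈ range (n + 1), 1 * (n : ℝ) ^ j * 1 := by
        gcongr with k hk
        rw [abs_mul, abs_mul, abs_pow, Nat.abs_cast]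
        have hkn : (k : ℝ) ≤ n := by exact_mod_cast Nat.lt_succ_iff.mp (mem_range.mp hk)
        gcongr
        exacts [hc k, abs_cos_le_one _]
    _ = (n + 1) * n ^ j := by simp

theorem mul_le_abs_cosPolyDeriv_one_sub_of_lt {ε : ℕ → ℝ} {n : ℕ} {x : ℝ} (hx : 0 < x)
    (hxπ : x ≤ π) (h : 2 ^ 7 * n * sfun x < |cosPolyDeriv ε n 1 x|) :
    62 * n ≤ |cosPolyDeriv (fun k => 1 - ε k) n 1 x| := by
  have hsin : 0 < sin (x / 2) := sin_pos_of_pos_of_lt_pi (by linarith) (by linarith [pi_pos])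
  have hs : 1 / 2 ≤ sfun x := by
    rw [sfun, one_div]
    exact inv_anti₀ (by positivity) (by linarith [sin_le_one (x / 2)])
  have hD : |cosPolyDeriv (fun _ => 1) n 1 x| ≤ 4 * n * sfun x := by
    simpa [cosPolyDeriv_one] using abs_sum_range_natCast_mul_sin_le hsin n
  rw [cosPolyDeriv_sub]
  have := abs_sub_abs_le_abs_sub (cosPolyDeriv ε n 1 x) (cosPolyDeriv (fun _ => 1) n 1 x)
  rw [abs_sub_comm] at this
  nlinarith [Nat.cast_nonneg (α := ℝ) n]

theorem abs_cosPolyDeriv_one_le_of_card_zeros {c : ℕ → ℝ} (hc : ∀ k, |c k| ≤ 1) {n : ℕ}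
    (hn : 0 < n) {δ a b : ℝ} (hlen : b - a = δ / n) {T : Finset ℝ} (hTab : ↑T ⊆ Set.Icc a b)
    (hT0 : ∀ z ∈ T, cosPolyDeriv c n 0 z = 0) {r : ℕ} (hr : r < T.card) {x : ℝ}
    (hx : x ∈ Set.Icc a b) : |cosPolyDeriv c n 1 x| ≤ δ ^ r * ((n + 1) * n) := by
  have h := abs_le_pow_mul_of_card_zeros (hasDerivAt_cosPolyDeriv c n) r
    (fun y _ => abs_cosPolyDeriv_le hc n (r + 1) y) hTab hT0 hr hx
  have hn0 : (n : ℝ) ≠ 0 := by positivity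
  calc |cosPolyDeriv c n 1 x| ≤ (δ / n) ^ r * ((n + 1) * n ^ (r + 1)) := hlen ▸ h
    _ = δ ^ r * ((n + 1) * n) := by rw [div_pow, pow_succ]; field_simp

theorem natCast_le_log_div_log_of_one_le_mul_pow {δ C : ℝ} (hδ0 : 0 < δ) (hδ1 : δ < 1) {r : ℕ}
    (h : 1 ≤ C * δ ^ r) : (r : ℝ) ≤ log C / log (1 / δ) := by
  have hδr : 0 < δ ^ r := pow_pos hδ0 r
  have hpow : (1 / δ) ^ r ≤ C := by
    rw [div_pow, one_pow, div_le_iff₀ hδr]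
    exact h
  rw [le_div_iff₀ (log_pos (by rw [lt_div_iff₀ hδ0]; linarith)), ← log_pow]
  exact log_le_log (by positivity) hpow

theorem stmt16_general (n : ℕ) (δ : ℝ) (hδ : δ ∈ Set.Ioo (0 : ℝ) (1 / 4))
    (a b : ℝ) (ha : (2 : ℝ) ^ (15 : ℕ) * (δ * n)⁻¹ ≤ a) (hb : b ≤ π)
    (hlen : b - a = δ / n)
    (ε : ℕ → ℝ) (hε : ∀ k, ε k = 0 ∨ ε k = 1)
    (g f : ℝ → ℝ)
    (hg : g = fun x => ∑ k ∈ Finset.range (n + 1), ε k * Real.cos (k * x))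
    (hf : f = fun x => Dker n x - g x)
    (hx₀ : ∃ x₀ ∈ Set.Icc a b, 2 ^ (7 : ℕ) * (n : ℝ) * sfun x₀ < |deriv g x₀|) :
    (zeros f (Set.Icc a b) : ℝ) ≤ Real.log (3 * n) / Real.log (1 / δ) + 1 := by
  obtain ⟨hδ0, hδ4⟩ := hδ
  obtain ⟨x₀, hx₀I, hx₀⟩ := hx₀
  have hc : ∀ k, |1 - ε k| ≤ 1 := fun k => by rcases hε k with h | h <;> simp [h]
  have hgF : g = cosPolyDeriv ε n 0 := by ext x; rw [hg, cosPolyDeriv_zero]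
  have hfF : f = cosPolyDeriv (fun k => 1 - ε k) n 0 := by
    ext x; simp [hf, hgF, Dker, cosPolyDeriv_zero, sub_mul, sum_sub_distrib]
  rw [hgF, (hasDerivAt_cosPolyDeriv ε n 0 x₀).deriv] at hx₀
  have hn : 0 < n := Nat.pos_of_ne_zero fun hn => by simp [hn, cosPolyDeriv] at hx₀
  have hn' : (1 : ℝ) ≤ n := by exact_mod_cast hn
  have hx₀pos : 0 < x₀ := (by positivity : (0 : ℝ) < 2 ^ 15 * (δ * n)⁻¹).trans_le (ha.trans hx₀I.1)
  have hlow := mul_le_abs_cosPolyDeriv_one_sub_of_lt hx₀pos (hx₀I.2.trans hb) hx₀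
  rcases le_or_gt (zeros f (Set.Icc a b)) 1 with hZ | hZ
  · have hZ' : (zeros f (Set.Icc a b) : ℝ) ≤ 1 := by exact_mod_cast hZ
    have : 0 ≤ log (3 * n) / log (1 / δ) :=
      div_nonneg (log_nonneg (by linarith)) (log_nonneg (by rw [le_div_iff₀ hδ0]; linarith))
    linarith
  have hfin := Set.finite_of_ncard_pos (zero_lt_one.trans hZ)
  rw [zeros, Set.ncard_eq_toFinset_card _ hfin] at hZ ⊢
  set T := hfin.toFinset
  have hup := abs_cosPolyDeriv_one_le_of_card_zeros hc hn hlen (T := T) (r := T.card - 1)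
    (fun z hz => (hfin.mem_toFinset.1 hz).1) (fun z hz => hfF ▸ (hfin.mem_toFinset.1 hz).2)
    (by omega) hx₀I
  have hδr := pow_nonneg hδ0.le (T.card - 1)
  have h62 : 62 ≤ δ ^ (T.card - 1) * (n + 1) :=
    le_of_mul_le_mul_right (by linarith) (by linarith : (0 : ℝ) < n)
  have hr := natCast_le_log_div_log_of_one_le_mul_pow hδ0 (by linarith) (C := 3 * n) (r := T.card - 1)
    (by nlinarith)
  rw [Nat.cast_sub (by omega), Nat.cast_one] at hr
  linarith

/-- For `δ ∈ (0, 1/4)`, let `I = [a,b] ⊆ [2¹⁵(δn)⁻¹, π]` be an interval of length `δ/n`,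
let `g` be a `{0,1}`-cosine polynomial with `deg g ≤ n` and let `f = D_n - g`.  If there
is `x₀ ∈ I` with `|g'(x₀)| > 2⁷ n s(x₀)` (i.e. `I ⊄ E'_n(g)`), then
`Z_I(f) ≤ log(3n)/log(1/δ) + 1`. -/
theorem stmt16 (n : ℕ) (δ : ℝ) (hδ : δ ∈ Set.Ioo (0 : ℝ) (1 / 4))
    (a b : ℝ) (ha : (2 : ℝ) ^ (15 : ℕ) * (δ * n)⁻¹ ≤ a) (hab : a ≤ b) (hb : b ≤ π)
    (hlen : b - a = δ / n)
    (ε : ℕ → ℝ) (hε : ∀ k, ε k = 0 ∨ ε k = 1)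
    (g f : ℝ → ℝ)
    (hg : g = fun x => ∑ k ∈ Finset.range (n + 1), ε k * Real.cos (k * x))
    (hf : f = fun x => Dker n x - g x)
    (hx₀ : ∃ x₀ ∈ Set.Icc a b, 2 ^ (7 : ℕ) * (n : ℝ) * sfun x₀ < |deriv g x₀|) :
    (zeros f (Set.Icc a b) : ℝ) ≤ Real.log (3 * n) / Real.log (1 / δ) + 1 :=
  stmt16_general n δ hδ a b ha hb hlen ε hε g f hg hf hx₀
end

section
/- There exist an absolute constant C > 0 and a natural number m_0 such that for all m ≥ m_0 the following holds. Let x ∈ ℝ satisfy d(x, πℤ) ≥ 2^{8}/m, where d(x, πℤ) = inf_{k ∈ ℤ} |x − πk|, let g(x) = ∑_{k=0}^{m} ε_k cos(kx), where ε_0, …, ε_m are independent random variables taking values 0 and 1 each with probability 1/2, and let B ⊆ ℝ² be an open ball of diameter 2^{-5}. Then P((|g(x)|, |m^{-1} g'(x)|) ∈ B) ≤ C/m. -/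
/-!
Esseen-type smoothing. Since `fejer t = 2 (1 - cos t) / t²` is nonnegative and at least `2/5`
for `|t| ≤ π`, the indicator of the ball is dominated by products of translates of `fejer` in the
two coordinates; as `fejer` is the Fourier transform of the triangle function on `[-1, 1]`, the
resulting sum is an average of the joint characteristic function of `(g(x), g'(x)/m)` over
frequencies `|ξ| ≤ 1`. For Bernoulli sums that characteristic function factors into a product of
`|cos ((ξ₁ cos kx - ξ₂ (k/m) sin kx) / 2)| ≤ exp (-(ξ₁ cos kx - ξ₂ (k/m) sin kx)² / 20)`, and the
quadratic form `∑ₖ (ξ₁ cos kx - ξ₂ (k/m) sin kx)²` is at least `m |ξ|² / 20` because, when `x` is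
at distance `≥ 2⁸/m` from `πℤ`, the Dirichlet sums `∑ e^{2ikx}` are bounded by
`1/|sin x| ≤ m/160`. Integrating the resulting Gaussian bound gives `O(1/m)`.
-/

open Real

/-- The random polynomial `g ~ G_m` determined by the Bernoulli outcomes
`e : Fin (m+1) → Bool`:  `g(x) = ∑_{k=0}^m ε_k cos(kx)`. -/
noncomputable def gB (m : ℕ) (e : Fin (m + 1) → Bool) : ℝ → ℝ :=
  fun x => ∑ k : Fin (m + 1), (if e k then (1 : ℝ) else 0) * Real.cos ((k : ℕ) * x)

open Finset

lemma cos_le_one_sub_sq_div_five {x : ℝ} (hx : |x| ≤ π) : cos x ≤ 1 - x ^ 2 / 5 := by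
  have hπ : π ^ 2 ≤ 10 := by nlinarith [pi_lt_d2, pi_pos]
  have hx2 : x ^ 2 / 5 ≤ 2 / π ^ 2 * x ^ 2 := by
    rw [div_mul_eq_mul_div, le_div_iff₀ (by positivity)]
    nlinarith [sq_nonneg x]
  linarith [cos_le_one_sub_mul_cos_sq hx]

lemma abs_cos_le_exp_neg_sq_div_five {x : ℝ} (hx : |x| ≤ π / 2) :
    |cos x| ≤ exp (-(x ^ 2 / 5)) := by
  rw [abs_of_nonneg (cos_nonneg_of_mem_Icc (abs_le.1 hx))]
  calc cos x ≤ 1 - x ^ 2 / 5 := cos_le_one_sub_sq_div_five (hx.trans (by linarith [pi_pos]))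
    _ ≤ exp (-(x ^ 2 / 5)) := by linarith [add_one_le_exp (-(x ^ 2 / 5))]

noncomputable def fejer (t : ℝ) : ℝ := ∫ ξ in (-1 : ℝ)..1, (1 - |ξ|) * cos (ξ * t)

lemma fejer_eq_two_mul_integral (t : ℝ) :
    fejer t = 2 * ∫ ξ in (0 : ℝ)..1, (1 - ξ) * cos (ξ * t) := by
  have hint (a b : ℝ) :
      IntervalIntegrable (fun ξ => (1 - |ξ|) * cos (ξ * t)) MeasureTheory.volume a b :=
    (by fun_prop : Continuous _).intervalIntegrable a b
  have hleft := intervalIntegral.integral_comp_neg (a := 0) (b := 1)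
    (fun ξ => (1 - |ξ|) * cos (ξ * t))
  have hright : ∫ ξ in (0 : ℝ)..1, (1 - |ξ|) * cos (ξ * t) =
      ∫ ξ in (0 : ℝ)..1, (1 - ξ) * cos (ξ * t) :=
    intervalIntegral.integral_congr fun ξ hξ => by
      rw [Set.uIcc_of_le zero_le_one] at hξ
      simp only [abs_of_nonneg hξ.1]
  simp only [abs_neg, neg_mul, cos_neg, neg_zero] at hleft
  rw [fejer, ← intervalIntegral.integral_add_adjacent_intervals (hint _ 0) (hint _ _), ← hleft,
    hright]
  ring

lemma fejer_eq {t : ℝ} (ht : t ≠ 0) : fejer t = 2 * (1 - cos t) / t ^ 2 := by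
  have hderiv : ∀ ξ ∈ Set.uIcc (0 : ℝ) 1,
      HasDerivAt (fun ξ => (1 - ξ) * sin (ξ * t) / t - cos (ξ * t) / t ^ 2)
        ((1 - ξ) * cos (ξ * t)) ξ := by
    intro ξ _
    have h : HasDerivAt (fun ξ => (1 - ξ) * sin (ξ * t) / t - cos (ξ * t) / t ^ 2)
        ((-1 * sin (ξ * t) + (1 - ξ) * (cos (ξ * t) * t)) / t - -sin (ξ * t) * t / t ^ 2) ξ :=
      ((((hasDerivAt_id ξ).const_sub 1).mul (hasDerivAt_mul_const t).sin).div_const t).sub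
        ((hasDerivAt_mul_const t).cos.div_const (t ^ 2))
    convert h using 1
    field_simp
    ring
  rw [fejer_eq_two_mul_integral, intervalIntegral.integral_eq_sub_of_hasDerivAt hderiv
    ((by fun_prop : Continuous _).intervalIntegrable _ _)]
  field_simp
  simp
  ring

lemma fejer_zero : fejer 0 = 1 := by
  rw [fejer_eq_two_mul_integral]
  simp only [mul_zero, cos_zero, mul_one]
  rw [intervalIntegral.integral_sub intervalIntegrable_const intervalIntegral.intervalIntegrable_id]
  norm_num [integral_id]

lemma fejer_nonneg (t : ℝ) : 0 ≤ fejer t := by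
  rcases eq_or_ne t 0 with rfl | ht
  · rw [fejer_zero]; exact zero_le_one
  · rw [fejer_eq ht]
    have := sub_nonneg.2 (cos_le_one t)
    positivity

lemma two_fifths_le_fejer {t : ℝ} (ht : |t| ≤ π) : 2 / 5 ≤ fejer t := by
  rcases eq_or_ne t 0 with rfl | h0
  · rw [fejer_zero]; norm_num
  · rw [fejer_eq h0, le_div_iff₀ (by positivity)]
    linarith [cos_le_one_sub_sq_div_five ht]

lemma two_fifths_le_fejer_sub_add_fejer_add {a c : ℝ} (h : |(|a|) - c| ≤ π) :
    2 / 5 ≤ fejer (a - c) + fejer (a + c) := by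
  rcases abs_choice a with ha | ha <;> rw [ha] at h
  · linarith [two_fifths_le_fejer h, fejer_nonneg (a + c)]
  · rw [← abs_neg, show -(-a - c) = a + c by ring] at h
    linarith [two_fifths_le_fejer h, fejer_nonneg (a - c)]

lemma integral_exp_neg_mul_sq_le {c : ℝ} (hc : 0 < c) :
    ∫ ξ in (-1 : ℝ)..1, exp (-c * ξ ^ 2) ≤ √(π / c) := by
  rw [intervalIntegral.integral_of_le (by norm_num), ← integral_gaussian]
  exact MeasureTheory.setIntegral_le_integral (integrable_exp_neg_mul_sq hc)
    (Filter.Eventually.of_forall fun _ => (exp_pos _).le)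

lemma sum_fejer_mul_eq_integral {Ω : Type*} [Fintype Ω] (A f : Ω → ℝ) :
    ∑ ω, fejer (A ω) * f ω =
      ∫ ξ in (-1 : ℝ)..1, (1 - |ξ|) * ∑ ω, cos (ξ * A ω) * f ω := by
  simp_rw [fejer, ← intervalIntegral.integral_mul_const, mul_sum]
  rw [intervalIntegral.integral_finsetSum fun ω _ =>
    (by fun_prop : Continuous _).intervalIntegrable _ _]
  exact sum_congr rfl fun ω _ => intervalIntegral.integral_congr fun ξ _ => by ring

theorem sum_fejer_mul_fejer_le {Ω : Type*} [Fintype Ω] (A B : Ω → ℝ) {c M : ℝ} (hc : 0 < c)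
    (hchar : ∀ ξ₁ ξ₂ : ℝ, |ξ₁| ≤ 1 → |ξ₂| ≤ 1 →
      ∑ ω, cos (ξ₁ * A ω) * cos (ξ₂ * B ω) ≤ M * exp (-c * (ξ₁ ^ 2 + ξ₂ ^ 2))) :
    ∑ ω, fejer (A ω) * fejer (B ω) ≤ M * (π / c) := by
  set G : ℝ → ℝ := fun ξ => exp (-c * ξ ^ 2)
  set I := ∫ ξ in (-1 : ℝ)..1, G ξ
  have hM : 0 ≤ M := by
    have h := hchar 0 0 (by simp) (by simp)
    simp only [zero_mul, cos_zero, mul_one, sum_const, card_univ, nsmul_eq_mul] at h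
    norm_num at h
    exact (Nat.cast_nonneg _).trans h
  have hG (ξ : ℝ) : 0 ≤ G ξ := (exp_pos _).le
  have hI₀ : 0 ≤ I := intervalIntegral.integral_nonneg (by norm_num) fun ξ _ => hG ξ
  have hI : I * I ≤ π / c := by
    have h := integral_exp_neg_mul_sq_le hc
    calc I * I ≤ √(π / c) * √(π / c) := mul_le_mul h h hI₀ (sqrt_nonneg _)
      _ = π / c := mul_self_sqrt (by positivity)
  have hweight {ξ S T : ℝ} (hξ : ξ ∈ Set.Icc (-1 : ℝ) 1) (hT : 0 ≤ T) (hST : S ≤ T) :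
      (1 - |ξ|) * S ≤ T := by
    have := abs_le.2 hξ
    nlinarith [abs_nonneg ξ]
  have hinner (ξ₁ : ℝ) (h₁ : ξ₁ ∈ Set.Icc (-1 : ℝ) 1) :
      ∑ ω, cos (ξ₁ * A ω) * fejer (B ω) ≤ M * G ξ₁ * I := by
    rw [sum_congr rfl fun ω _ => mul_comm _ _, sum_fejer_mul_eq_integral,
      ← intervalIntegral.integral_const_mul]
    refine intervalIntegral.integral_mono_on (by norm_num)
      ((by fun_prop : Continuous _).intervalIntegrable _ _)
      ((by fun_prop : Continuous _).intervalIntegrable _ _) fun ξ₂ h₂ =>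
        hweight h₂ (mul_nonneg (mul_nonneg hM (hG _)) (hG _)) ?_
    rw [sum_congr rfl fun ω _ => mul_comm _ _, mul_assoc, ← exp_add, ← mul_add]
    exact hchar ξ₁ ξ₂ (abs_le.2 h₁) (abs_le.2 h₂)
  calc ∑ ω, fejer (A ω) * fejer (B ω)
      = ∫ ξ₁ in (-1 : ℝ)..1, (1 - |ξ₁|) * ∑ ω, cos (ξ₁ * A ω) * fejer (B ω) :=
        sum_fejer_mul_eq_integral A _
    _ ≤ ∫ ξ₁ in (-1 : ℝ)..1, M * G ξ₁ * I :=
        intervalIntegral.integral_mono_on (by norm_num)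
          ((by fun_prop : Continuous _).intervalIntegrable _ _)
          ((by fun_prop : Continuous _).intervalIntegrable _ _) fun ξ₁ h₁ =>
          hweight h₁ (mul_nonneg (mul_nonneg hM (hG _)) hI₀) (hinner ξ₁ h₁)
    _ = M * (I * I) := by
        rw [intervalIntegral.integral_mul_const, intervalIntegral.integral_const_mul]; ring
    _ ≤ M * (π / c) := mul_le_mul_of_nonneg_left hI hM

open scoped Classical in
lemma indicator_mem_ball_le_fejer {a b r : ℝ} (hr : r ≤ π) (z : EuclideanSpace ℝ (Fin 2)) :
    (if (WithLp.toLp 2 ![|a|, |b|] : EuclideanSpace ℝ (Fin 2)) ∈ Metric.ball z r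
      then (1 : ℝ) else 0) ≤
      25 / 4 * ((fejer (a - z 0) + fejer (a + z 0)) * (fejer (b - z 1) + fejer (b + z 1))) := by
  have hfa := fejer_nonneg (a - z 0); have hfa' := fejer_nonneg (a + z 0)
  have hfb := fejer_nonneg (b - z 1); have hfb' := fejer_nonneg (b + z 1)
  split_ifs with h
  · have hcoord (i : Fin 2) :
        dist ((WithLp.toLp 2 ![|a|, |b|] : EuclideanSpace ℝ (Fin 2)) i) (z i) ≤ π :=
      ((PiLp.dist_apply_le _ _ i).trans (Metric.mem_ball.1 h).le).trans hr
    have ha := two_fifths_le_fejer_sub_add_fejer_add (hcoord 0)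
    have hb := two_fifths_le_fejer_sub_add_fejer_add (hcoord 1)
    nlinarith [mul_le_mul ha hb (by norm_num) (by positivity)]
  · positivity

open scoped Classical in
theorem sum_indicator_abs_mem_ball_le {Ω : Type*} [Fintype Ω] (A B : Ω → ℝ) {c M r : ℝ}
    (hc : 0 < c) (hr : r ≤ π) (z : EuclideanSpace ℝ (Fin 2))
    (hchar : ∀ w₁ w₂ ξ₁ ξ₂ : ℝ, |ξ₁| ≤ 1 → |ξ₂| ≤ 1 →
      ∑ ω, cos (ξ₁ * (A ω - w₁)) * cos (ξ₂ * (B ω - w₂)) ≤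
        M * exp (-c * (ξ₁ ^ 2 + ξ₂ ^ 2))) :
    (∑ ω, if (WithLp.toLp 2 ![|A ω|, |B ω|] : EuclideanSpace ℝ (Fin 2)) ∈ Metric.ball z r
      then (1 : ℝ) else 0) ≤ 25 * M * (π / c) := by
  have hshift (w₁ w₂ : ℝ) :
      ∑ ω, fejer (A ω - w₁) * fejer (B ω - w₂) ≤ M * (π / c) :=
    sum_fejer_mul_fejer_le (A · - w₁) (B · - w₂) hc (hchar w₁ w₂)
  have h₁ := hshift (z 0) (z 1)
  have h₂ := hshift (z 0) (-z 1)
  have h₃ := hshift (-z 0) (z 1)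
  have h₄ := hshift (-z 0) (-z 1)
  simp only [sub_neg_eq_add] at h₂ h₃ h₄
  calc (∑ ω, if (WithLp.toLp 2 ![|A ω|, |B ω|] : EuclideanSpace ℝ (Fin 2)) ∈
          Metric.ball z r then (1 : ℝ) else 0)
      ≤ ∑ ω, 25 / 4 * ((fejer (A ω - z 0) + fejer (A ω + z 0)) *
          (fejer (B ω - z 1) + fejer (B ω + z 1))) :=
        sum_le_sum fun ω _ => indicator_mem_ball_le_fejer hr z
    _ = 25 / 4 * (∑ ω, fejer (A ω - z 0) * fejer (B ω - z 1) +
          ∑ ω, fejer (A ω - z 0) * fejer (B ω + z 1) +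
          ∑ ω, fejer (A ω + z 0) * fejer (B ω - z 1) +
          ∑ ω, fejer (A ω + z 0) * fejer (B ω + z 1)) := by
        simp only [← sum_add_distrib, mul_sum]
        exact sum_congr rfl fun ω _ => by ring
    _ ≤ 25 * M * (π / c) := by linarith

lemma norm_one_add_exp_mul_I (t : ℝ) :
    ‖1 + Complex.exp (t * Complex.I)‖ = 2 * |cos (t / 2)| := by
  have h : 1 + Complex.exp (t * Complex.I) =
      Complex.exp ((t / 2 : ℝ) * Complex.I) * (2 * (cos (t / 2) : ℝ)) := by
    rw [Complex.ofReal_cos, Complex.cos, mul_div_cancel₀ _ two_ne_zero, mul_add,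
      ← Complex.exp_add, ← Complex.exp_add]
    push_cast
    ring_nf
    rw [Complex.exp_zero, add_comm]
  rw [h, norm_mul, Complex.norm_exp_ofReal_mul_I, one_mul, norm_mul, Complex.norm_real,
    Real.norm_eq_abs]
  norm_num

section Bernoulli

variable {ι : Type*} [Fintype ι] [DecidableEq ι]

lemma abs_sum_cos_add_sum_ite_le (a : ι → ℝ) (b : ℝ) :
    |∑ e : ι → Bool, cos (b + ∑ k, if e k then a k else 0)| ≤
      2 ^ Fintype.card ι * ∏ k, |cos (a k / 2)| := by
  have hexp :
      ∑ e : ι → Bool, Complex.exp ((b + ∑ k, if e k then a k else 0 : ℝ) * Complex.I) =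
      Complex.exp (b * Complex.I) * ∏ k, (1 + Complex.exp (a k * Complex.I)) := by
    have hfactor (k : ι) : 1 + Complex.exp (a k * Complex.I) =
        ∑ j : Bool, if j then Complex.exp (a k * Complex.I) else 1 := by
      simp [add_comm]
    rw [prod_congr rfl fun k _ => hfactor k, Fintype.prod_sum, mul_sum]
    refine sum_congr rfl fun e _ => ?_
    push_cast
    rw [add_mul, Complex.exp_add, sum_mul, Complex.exp_sum]
    congr 1
    exact prod_congr rfl fun k _ => by split_ifs <;> simp
  calc |∑ e : ι → Bool, cos (b + ∑ k, if e k then a k else 0)|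
      = |(∑ e : ι → Bool,
          Complex.exp ((b + ∑ k, if e k then a k else 0 : ℝ) * Complex.I)).re| := by
        simp only [Complex.re_sum, Complex.exp_ofReal_mul_I_re]
    _ ≤ ‖Complex.exp (b * Complex.I) * ∏ k, (1 + Complex.exp (a k * Complex.I))‖ :=
        hexp ▸ Complex.abs_re_le_norm _
    _ = 2 ^ Fintype.card ι * ∏ k, |cos (a k / 2)| := by
        simp only [norm_mul, Complex.norm_exp_ofReal_mul_I, one_mul, norm_prod,
          norm_one_add_exp_mul_I, prod_mul_distrib, prod_const, card_univ]

lemma abs_sum_cos_linear_le (a b : ι → ℝ) (ha : ∀ k, |a k| ≤ 1) (hb : ∀ k, |b k| ≤ 1)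
    {R : ℝ}
    (hR : ∀ s t : ℝ, R * (s ^ 2 + t ^ 2) ≤ ∑ k, (s * a k + t * b k) ^ 2) (w₁ w₂ : ℝ)
    {s t : ℝ} (hs : |s| ≤ 1) (ht : |t| ≤ 1) :
    |∑ e : ι → Bool, cos (s * ((∑ k, if e k then a k else 0) - w₁) +
        t * ((∑ k, if e k then b k else 0) - w₂))| ≤
      2 ^ Fintype.card ι * exp (-(R / 20) * (s ^ 2 + t ^ 2)) := by
  have harg (e : ι → Bool) : s * ((∑ k, if e k then a k else 0) - w₁) +
      t * ((∑ k, if e k then b k else 0) - w₂) =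
      (-(s * w₁) - t * w₂) + ∑ k, if e k then s * a k + t * b k else 0 := by
    have hsplit : (∑ k, if e k then s * a k + t * b k else 0) =
        (∑ k, if e k then s * a k else 0) + ∑ k, if e k then t * b k else 0 := by
      rw [← sum_add_distrib]
      exact sum_congr rfl fun k _ => by split_ifs <;> simp
    rw [hsplit]
    simp only [mul_sub, mul_sum, mul_ite, mul_zero]
    ring
  simp only [harg]
  refine (abs_sum_cos_add_sum_ite_le _ _).trans (mul_le_mul_of_nonneg_left ?_ (by positivity))
  have hterm (k : ι) :
      |cos ((s * a k + t * b k) / 2)| ≤ exp (-((s * a k + t * b k) ^ 2 / 20)) := by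
    have hk : |s * a k + t * b k| ≤ 2 := by
      calc |s * a k + t * b k| ≤ |s| * |a k| + |t| * |b k| := by
            rw [← abs_mul, ← abs_mul]; exact abs_add_le _ _
        _ ≤ 1 * 1 + 1 * 1 := by gcongr; exacts [ha k, hb k]
        _ = 2 := by norm_num
    have := abs_cos_le_exp_neg_sq_div_five (x := (s * a k + t * b k) / 2) (by
      rw [abs_div, abs_two]; linarith [pi_gt_three])
    convert this using 3
    ring
  calc ∏ k, |cos ((s * a k + t * b k) / 2)| ≤ ∏ k, exp (-((s * a k + t * b k) ^ 2 / 20)) :=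
        prod_le_prod (fun k _ => abs_nonneg _) fun k _ => hterm k
    _ = exp (-(∑ k, (s * a k + t * b k) ^ 2) / 20) := by
        rw [← exp_sum, neg_div, sum_div, ← sum_neg_distrib]
    _ ≤ exp (-(R / 20) * (s ^ 2 + t ^ 2)) := by
        gcongr
        linarith [hR s t]

lemma sum_cos_mul_cos_le (a b : ι → ℝ) (ha : ∀ k, |a k| ≤ 1) (hb : ∀ k, |b k| ≤ 1)
    {R : ℝ}
    (hR : ∀ s t : ℝ, R * (s ^ 2 + t ^ 2) ≤ ∑ k, (s * a k + t * b k) ^ 2) (w₁ w₂ : ℝ)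
    {ξ₁ ξ₂ : ℝ} (h₁ : |ξ₁| ≤ 1) (h₂ : |ξ₂| ≤ 1) :
    ∑ e : ι → Bool, cos (ξ₁ * ((∑ k, if e k then a k else 0) - w₁)) *
        cos (ξ₂ * ((∑ k, if e k then b k else 0) - w₂)) ≤
      2 ^ Fintype.card ι * exp (-(R / 20) * (ξ₁ ^ 2 + ξ₂ ^ 2)) := by
  have hplus := abs_sum_cos_linear_le a b ha hb hR w₁ w₂ h₁ h₂
  have hminus := abs_sum_cos_linear_le a b ha hb hR w₁ w₂ h₁ (abs_neg ξ₂ ▸ h₂)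
  rw [neg_sq] at hminus
  have hprod (x y : ℝ) : cos x * cos y = (cos (x + y) + cos (x + -y)) / 2 := by
    rw [← sub_eq_add_neg, cos_add, cos_sub]; ring
  simp only [hprod, ← neg_mul, ← sum_div, sum_add_distrib]
  linarith [(abs_le.1 hplus).2, (abs_le.1 hminus).2]

end Bernoulli

lemma norm_sum_Ico_pow_le {z : ℂ} (hz : ‖z‖ = 1) (hz1 : z ≠ 1) (a n : ℕ) :
    ‖∑ k ∈ Ico a n, z ^ k‖ ≤ 2 / ‖z - 1‖ := by
  rcases le_or_gt a n with han | hna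
  · rw [geom_sum_Ico hz1 han, norm_div]
    gcongr
    calc ‖z ^ n - z ^ a‖ ≤ ‖z ^ n‖ + ‖z ^ a‖ := norm_sub_le _ _
      _ = 2 := by rw [norm_pow, norm_pow, hz]; norm_num
  · rw [Ico_eq_empty_of_le hna.le, sum_empty, norm_zero]
    positivity

lemma norm_sum_Ico_exp_le {x : ℝ} (hx : sin x ≠ 0) (a n : ℕ) :
    ‖∑ k ∈ Ico a n, Complex.exp ((2 * (k * x) : ℝ) * Complex.I)‖ ≤ 1 / |sin x| := by
  set z := Complex.exp (Complex.I * (2 * x : ℝ))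
  have hpow (k : ℕ) : Complex.exp ((2 * (k * x) : ℝ) * Complex.I) = z ^ k := by
    rw [← Complex.exp_nat_mul]; push_cast; ring_nf
  have hz1 : ‖z - 1‖ = 2 * |sin x| := by
    rw [Complex.norm_exp_I_mul_ofReal_sub_one, norm_mul, Real.norm_eq_abs]
    norm_num
  have hz : z ≠ 1 := fun h => by simp [h, hx] at hz1
  simp only [hpow]
  calc ‖∑ k ∈ Ico a n, z ^ k‖ ≤ 2 / ‖z - 1‖ :=
        norm_sum_Ico_pow_le (Complex.norm_exp_I_mul_ofReal _) hz a n
    _ = 1 / |sin x| := by rw [hz1]; field_simp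

lemma abs_sum_Ico_cos_le {x : ℝ} (hx : sin x ≠ 0) (a n : ℕ) :
    |∑ k ∈ Ico a n, cos (2 * (k * x))| ≤ 1 / |sin x| := by
  refine le_trans (le_of_eq ?_)
    ((Complex.abs_re_le_norm _).trans (norm_sum_Ico_exp_le hx a n))
  simp only [Complex.re_sum, Complex.exp_ofReal_mul_I_re]

lemma abs_sum_Ico_sin_le {x : ℝ} (hx : sin x ≠ 0) (a n : ℕ) :
    |∑ k ∈ Ico a n, sin (2 * (k * x))| ≤ 1 / |sin x| := by
  refine le_trans (le_of_eq ?_)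
    ((Complex.abs_im_le_norm _).trans (norm_sum_Ico_exp_le hx a n))
  simp only [Complex.im_sum, Complex.exp_ofReal_mul_I_im]

lemma sum_range_natCast_mul (w : ℕ → ℝ) (n : ℕ) :
    ∑ k ∈ range n, (k : ℝ) * w k = ∑ j ∈ range n, ∑ k ∈ Ico (j + 1) n, w k := by
  rw [sum_comm' (t' := range n) (s' := fun k => range k) (by intro j k; simp; omega)]
  simp

lemma abs_sum_range_mul_sin_le {x : ℝ} (hx : sin x ≠ 0) (n : ℕ) :
    |∑ k ∈ range n, (k : ℝ) * sin (2 * (k * x))| ≤ n / |sin x| := by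
  rw [sum_range_natCast_mul fun k => sin (2 * (k * x))]
  calc |∑ j ∈ range n, ∑ k ∈ Ico (j + 1) n, sin (2 * (k * x))|
      ≤ ∑ j ∈ range n, |∑ k ∈ Ico (j + 1) n, sin (2 * (k * x))| := abs_sum_le_sum_abs _ _
    _ ≤ ∑ j ∈ range n, 1 / |sin x| := sum_le_sum fun j _ => abs_sum_Ico_sin_le hx _ _
    _ = n / |sin x| := by simp [div_eq_mul_inv]

lemma sum_range_cos_sq_ge {x : ℝ} (hx : sin x ≠ 0) (n : ℕ) :
    (n - 1 / |sin x|) / 2 ≤ ∑ k ∈ range n, cos (k * x) ^ 2 := by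
  have h := (abs_le.1 (abs_sum_Ico_cos_le hx 0 n)).1
  rw [← range_eq_Ico] at h
  simp only [cos_sq, sum_add_distrib, ← sum_div, sum_const, card_range, nsmul_eq_mul]
  linarith

lemma sum_Ico_sin_sq_ge {x : ℝ} (hx : sin x ≠ 0) {a n : ℕ} (han : a ≤ n) :
    ((n : ℝ) - a - 1 / |sin x|) / 2 ≤ ∑ k ∈ Ico a n, sin (k * x) ^ 2 := by
  have h := (abs_le.1 (abs_sum_Ico_cos_le hx a n)).2
  simp only [sin_sq, cos_sq, sub_add_eq_sub_sub, sum_sub_distrib, ← sum_div, sum_const,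
    Nat.card_Ico, nsmul_eq_mul, Nat.cast_sub han]
  linarith

lemma sum_range_div_sq_mul_sin_sq_ge {x : ℝ} (hx : sin x ≠ 0) {m : ℕ} (hm : 0 < m) :
    (m / 2 - 1 / |sin x|) / 8 ≤
      ∑ k ∈ range (m + 1), ((k : ℝ) / m) ^ 2 * sin (k * x) ^ 2 := by
  set q := (m + 1) / 2
  have hq : q ≤ m + 1 := Nat.div_le_self _ _
  have hcard : (m : ℝ) / 2 ≤ (m + 1 : ℕ) - q := by
    rw [div_le_iff₀ two_pos, ← Nat.cast_sub hq]
    exact_mod_cast (by omega : m ≤ (m + 1 - q) * 2)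
  have hsin_sq := sum_Ico_sin_sq_ge hx hq
  calc (m / 2 - 1 / |sin x|) / 8 ≤ 1 / 4 * ∑ k ∈ Ico q (m + 1), sin (k * x) ^ 2 := by linarith
    _ = ∑ k ∈ Ico q (m + 1), 1 / 4 * sin (k * x) ^ 2 := mul_sum _ _ _
    _ ≤ ∑ k ∈ Ico q (m + 1), ((k : ℝ) / m) ^ 2 * sin (k * x) ^ 2 := by
        refine sum_le_sum fun k hk => mul_le_mul_of_nonneg_right ?_ (sq_nonneg _)
        have hk : (m : ℝ) ≤ 2 * k := by
          exact_mod_cast (by have := (mem_Ico.1 hk).1; omega)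
        rw [div_pow, le_div_iff₀ (by positivity)]
        nlinarith
    _ ≤ ∑ k ∈ range (m + 1), ((k : ℝ) / m) ^ 2 * sin (k * x) ^ 2 := by
        refine sum_le_sum_of_subset_of_nonneg ?_ fun k _ _ => by positivity
        rw [range_eq_Ico]
        exact Ico_subset_Ico (Nat.zero_le q) le_rfl

lemma abs_sum_range_div_mul_sin_mul_cos_le {x : ℝ} (hx : sin x ≠ 0) {m : ℕ} (hm : 0 < m) :
    |∑ k ∈ range (m + 1), (k : ℝ) / m * (sin (k * x) * cos (k * x))| ≤ 1 / |sin x| := by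
  have hm' : (1 : ℝ) ≤ m := Nat.one_le_cast.2 hm
  have hhalf : ∑ k ∈ range (m + 1), (k : ℝ) / m * (sin (k * x) * cos (k * x)) =
      1 / (2 * m) * ∑ k ∈ range (m + 1), (k : ℝ) * sin (2 * (k * x)) := by
    simp only [mul_sum, sin_two_mul]
    exact sum_congr rfl fun k _ => by field_simp
  rw [hhalf, abs_mul, abs_of_pos (by positivity)]
  calc 1 / (2 * m) * |∑ k ∈ range (m + 1), (k : ℝ) * sin (2 * (k * x))|
      ≤ 1 / (2 * m) * ((m + 1 : ℕ) / |sin x|) := by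
        gcongr; exact abs_sum_range_mul_sin_le hx (m + 1)
    _ = (m + 1) / (2 * m) * (1 / |sin x|) := by push_cast; ring
    _ ≤ 1 * (1 / |sin x|) := by
        gcongr
        rw [div_le_one (by positivity)]
        linarith
    _ = 1 / |sin x| := one_mul _

lemma le_sum_sq_cos_sub_sin {m : ℕ} (hm : 0 < m) {x : ℝ} (hsin : 160 / m ≤ |sin x|)
    (s t : ℝ) :
    m / 20 * (s ^ 2 + t ^ 2) ≤
      ∑ k ∈ range (m + 1), (s * cos (k * x) - t * (k / m * sin (k * x))) ^ 2 := by
  have hm' : (0 : ℝ) < m := Nat.cast_pos.2 hm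
  have hsin_pos : 0 < |sin x| := (by positivity : (0 : ℝ) < 160 / m).trans_le hsin
  have hx : sin x ≠ 0 := abs_pos.1 hsin_pos
  have hD : 1 / |sin x| ≤ m / 160 := by
    rw [div_le_iff₀ hm'] at hsin
    rw [div_le_div_iff₀ hsin_pos (by norm_num)]
    linarith
  have h₁₁ := sum_range_cos_sq_ge hx (m + 1)
  have h₂₂ := sum_range_div_sq_mul_sin_sq_ge hx hm
  have h₁₂ := abs_le.1 (abs_sum_range_div_mul_sin_mul_cos_le hx hm)
  set M₁₁ := ∑ k ∈ range (m + 1), cos (k * x) ^ 2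
  set M₂₂ := ∑ k ∈ range (m + 1), ((k : ℝ) / m) ^ 2 * sin (k * x) ^ 2
  set M₁₂ := ∑ k ∈ range (m + 1), (k : ℝ) / m * (sin (k * x) * cos (k * x))
  have hexpand : ∑ k ∈ range (m + 1), (s * cos (k * x) - t * (k / m * sin (k * x))) ^ 2 =
      s ^ 2 * M₁₁ + t ^ 2 * M₂₂ - 2 * s * t * M₁₂ := by
    simp only [M₁₁, M₂₂, M₁₂, mul_sum, ← sum_add_distrib, ← sum_sub_distrib]
    exact sum_congr rfl fun k _ => by ring
  push_cast at h₁₁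
  rw [hexpand]
  nlinarith [mul_nonneg (sq_nonneg (s + t)) (by linarith : 0 ≤ m / 160 - M₁₂),
    mul_nonneg (sq_nonneg (s - t)) (by linarith : 0 ≤ m / 160 + M₁₂),
    mul_nonneg (sq_nonneg s) (by linarith : 0 ≤ M₁₁ - m / 17),
    mul_nonneg (sq_nonneg t) (by linarith : 0 ≤ M₂₂ - m / 17)]

lemma mul_le_abs_sin_of_forall_le_abs_sub {x δ : ℝ} (h : ∀ k : ℤ, δ ≤ |x - π * k|) :
    2 / π * δ ≤ |sin x| := by
  set r := round (x / π)
  set u := x - π * r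
  have hu : |u| ≤ π / 2 := by
    have hround := abs_sub_round (x / π)
    calc |u| = π * |x / π - r| := by
          rw [← abs_of_pos pi_pos, ← abs_mul, abs_of_pos pi_pos, mul_sub,
            mul_div_cancel₀ _ pi_ne_zero]
      _ ≤ π * (1 / 2) := by gcongr
      _ = π / 2 := by ring
  calc 2 / π * δ ≤ 2 / π * |u| := by gcongr; exact h r
    _ ≤ sin |u| := mul_le_sin (abs_nonneg u) hu
    _ ≤ |sin u| := by
        rcases abs_choice u with hu | hu <;> rw [hu]
        exacts [le_abs_self _, sin_neg u ▸ neg_le_abs _]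
    _ = |sin x| := by
        rw [show u = x - r * π by ring, sin_sub_int_mul_pi, abs_mul, abs_neg_one_zpow, one_mul]

lemma gB_apply (m : ℕ) (e : Fin (m + 1) → Bool) (x : ℝ) :
    gB m e x = ∑ k, if e k then cos ((k : ℕ) * x) else 0 := by
  simp only [gB, ite_mul, one_mul, zero_mul]

lemma deriv_gB (m : ℕ) (e : Fin (m + 1) → Bool) (x : ℝ) :
    deriv (gB m e) x = ∑ k, if e k then -((k : ℕ) * sin ((k : ℕ) * x)) else 0 := by
  have h : HasDerivAt (gB m e)
      (∑ k : Fin (m + 1),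
        (if e k then (1 : ℝ) else 0) * (-sin ((k : ℕ) * x) * ((k : ℕ) * 1))) x :=
    HasDerivAt.fun_sum fun k _ => ((hasDerivAt_id' x).const_mul _).cos.const_mul _
  rw [h.deriv]
  exact sum_congr rfl fun k _ => by split_ifs <;> ring

lemma sum_cos_mul_cos_gB_le {m : ℕ} (hm : 0 < m) {x : ℝ} (hsin : 160 / m ≤ |sin x|)
    (w₁ w₂ ξ₁ ξ₂ : ℝ) (h₁ : |ξ₁| ≤ 1) (h₂ : |ξ₂| ≤ 1) :
    ∑ e : Fin (m + 1) → Bool, cos (ξ₁ * (gB m e x - w₁)) *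
        cos (ξ₂ * ((m : ℝ)⁻¹ * deriv (gB m e) x - w₂)) ≤
      2 ^ (m + 1) * exp (-(m / 400) * (ξ₁ ^ 2 + ξ₂ ^ 2)) := by
  have hm' : (0 : ℝ) < m := Nat.cast_pos.2 hm
  set a : Fin (m + 1) → ℝ := fun k => cos ((k : ℕ) * x)
  set b : Fin (m + 1) → ℝ := fun k => (m : ℝ)⁻¹ * -((k : ℕ) * sin ((k : ℕ) * x))
  have ha (k : Fin (m + 1)) : |a k| ≤ 1 := abs_cos_le_one _
  have hb (k : Fin (m + 1)) : |b k| ≤ 1 := by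
    have hk : ((k : ℕ) : ℝ) ≤ m := Nat.cast_le.2 (Nat.lt_succ_iff.1 k.isLt)
    simp only [b, abs_mul, abs_neg, abs_inv, Nat.abs_cast]
    rw [inv_mul_le_iff₀ hm', mul_one]
    exact (mul_le_of_le_one_right (Nat.cast_nonneg _) (abs_sin_le_one _)).trans hk
  have hR (s t : ℝ) : m / 20 * (s ^ 2 + t ^ 2) ≤ ∑ k, (s * a k + t * b k) ^ 2 := by
    rw [Fin.sum_univ_eq_sum_range
      (fun k : ℕ => (s * cos (k * x) + t * ((m : ℝ)⁻¹ * -(k * sin (k * x)))) ^ 2)]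
    convert le_sum_sq_cos_sub_sin hm hsin s t using 3
    ring
  convert sum_cos_mul_cos_le a b ha hb hR w₁ w₂ h₁ h₂ using 2
  · simp only [gB_apply, deriv_gB, mul_sum, mul_ite, mul_zero, a, b]
  · simp
  · congr 2; ring

open scoped Classical in
/-- There is `C > 0` and `m₀ ∈ ℕ` such that for all `m ≥ m₀`: if `x` satisfies
`d(x, πℤ) ≥ 2⁸/m`, `g ~ G_m`, and `B ⊆ ℝ²` is an open ball of diameter `2⁻⁵` (i.e. of
radius `2⁻⁶`), then `P((|g(x)|, |m⁻¹g'(x)|) ∈ B) ≤ C/m`, the probability being the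
proportion of the `2^(m+1)` Bernoulli outcomes. -/
theorem stmt18 :
    ∃ C : ℝ, 0 < C ∧ ∃ m₀ : ℕ, ∀ m : ℕ, m₀ ≤ m →
      ∀ x : ℝ, (∀ k : ℤ, (2 : ℝ) ^ (8 : ℕ) / m ≤ |x - π * k|) →
      ∀ z : EuclideanSpace ℝ (Fin 2),
        (∑ e : Fin (m + 1) → Bool,
          if (WithLp.toLp 2 ![|gB m e x|, |(m : ℝ)⁻¹ * deriv (gB m e) x|] : EuclideanSpace ℝ (Fin 2)) ∈
              Metric.ball z (((2 : ℝ) ^ (6 : ℕ))⁻¹) then (1 : ℝ) else 0) / 2 ^ (m + 1) ≤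
          C / m := by
  refine ⟨10000 * π, by positivity, 1, fun m hm x hx z => ?_⟩
  have hm' : (0 : ℝ) < m := Nat.cast_pos.2 hm
  have hsin : 160 / m ≤ |sin x| := by
    refine le_trans ?_ (mul_le_abs_sin_of_forall_le_abs_sub hx)
    rw [mul_div_assoc', div_le_div_iff_of_pos_right hm', div_mul_eq_mul_div, le_div_iff₀ pi_pos]
    linarith [pi_lt_d2]
  calc _ ≤ 25 * 2 ^ (m + 1) * (π / (m / 400)) / 2 ^ (m + 1) := by
        gcongr
        exact sum_indicator_abs_mem_ball_le _ _ (by positivity) (by linarith [pi_gt_three]) z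
          (sum_cos_mul_cos_gB_le hm hsin)
    _ = 10000 * π / m := by field_simp; ring
end
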